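/- arXiv:1509.04912 — 8 statements merged into one kernel-verified Lean document; each statement's English description precedes it below -/
import Mathlib

section
/- Let Γ be an unbounded subset of ℂ and let B be the backward shift operator on ℓ²(ℕ,ℂ), defined by (Bx)(n) = x(n+1) for all n ∈ ℕ. Then B is Γ-supercyclic, i.e. there exists x ∈ ℓ²(ℕ,ℂ) such that {γ·B^n x : γ ∈ Γ, n ∈ ℕ} is dense in ℓ²(ℕ,ℂ), but B is not hypercyclic, i.e. no vector y ∈ ℓ²(ℕ,ℂ) has {B^n y : n ∈ ℕ} dense in ℓ²(ℕ,ℂ). -/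
/-!
The backward shift `B` on `ℓᵖ` (`1 ≤ p < ∞`) is a contraction, so no orbit is dense. On the
other hand `Bⁿ u → 0` for every `u`, while every `v` has a preimage under `Bⁿ` of norm at most
`‖v‖` (the forward shift of `v`). Hence for `γ ∈ Γ` large and then `n` large, `u + γ⁻¹ • w` with
`Bⁿ w = v` is close to `u` and is mapped by `γ • Bⁿ` close to `v`: the family `γ • Bⁿ` is
topologically transitive. Since `ℓᵖ` is a separable Banach space, Birkhoff's transitivity theorem
(a Baire category argument) produces a vector whose `Γ`-scaled orbit is dense.
-/

open Filter Topology TopologicalSpace Bornology Set Metric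

open scoped ENNReal

section Transitivity

variable {ι X Y : Type*} [TopologicalSpace X] [TopologicalSpace Y]

def IsTopologicallyTransitive (f : ι → X → Y) : Prop :=
  ∀ U V, IsOpen U → IsOpen V → U.Nonempty → V.Nonempty → ∃ i, (U ∩ f i ⁻¹' V).Nonempty

theorem IsTopologicallyTransitive.exists_dense_range [BaireSpace X] [Nonempty X]
    [SecondCountableTopology Y] {f : ι → X → Y} (hf : IsTopologicallyTransitive f)
    (hcont : ∀ i, Continuous (f i)) : ∃ x, Dense (range fun i => f i x) := by
  obtain ⟨b, hb_countable, hb_empty, hb⟩ := exists_countable_basis Y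
  have hdense : Dense (⋂ V ∈ b, ⋃ i, f i ⁻¹' V) := by
    refine dense_biInter_of_isOpen (fun V hV => isOpen_iUnion fun i =>
      (hb.isOpen hV).preimage (hcont i)) hb_countable fun V hV => ?_
    have hV_ne : V.Nonempty := nonempty_iff_ne_empty.2 fun h => hb_empty (h ▸ hV)
    refine dense_iff_inter_open.2 fun U hU hU_ne => ?_
    obtain ⟨i, x, hxU, hxV⟩ := hf U V hU (hb.isOpen hV) hU_ne hV_ne
    exact ⟨x, hxU, mem_iUnion.2 ⟨i, hxV⟩⟩
  obtain ⟨x, hx⟩ := hdense.nonempty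
  refine ⟨x, hb.dense_iff.2 fun V hV _ => ?_⟩
  obtain ⟨i, hi⟩ := mem_iUnion.1 (mem_iInter₂.1 hx V hV)
  exact ⟨f i x, hi, i, rfl⟩

theorem isTopologicallyTransitive_smul_pow {𝕜 E : Type*} [NontriviallyNormedField 𝕜]
    [NormedAddCommGroup E] [NormedSpace 𝕜 E] {Γ : Set 𝕜} (hΓ : ¬IsBounded Γ) {T : E →L[𝕜] E}
    (hT : ∀ u, Tendsto (fun n => (T ^ n) u) atTop (𝓝 0))
    (hT_rightInv : ∀ n v, ∃ w, (T ^ n) w = v ∧ ‖w‖ ≤ ‖v‖) :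
    IsTopologicallyTransitive fun c : Γ × ℕ => (c.1 : 𝕜) • ⇑(T ^ c.2) := by
  intro U V hU hV ⟨u, hu⟩ ⟨v, hv⟩
  obtain ⟨ε₁, hε₁, hUε⟩ := Metric.isOpen_iff.1 hU u hu
  obtain ⟨ε₂, hε₂, hVε⟩ := Metric.isOpen_iff.1 hV v hv
  set ε := min ε₁ ε₂
  have hε : 0 < ε := lt_min hε₁ hε₂
  obtain ⟨γ, hγΓ, hγ⟩ : ∃ γ ∈ Γ, ‖v‖ / ε < ‖γ‖ := by
    by_contra! h
    exact hΓ (isBounded_iff_forall_norm_le.2 ⟨_, h⟩)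
  have hγ₀ : 0 < ‖γ‖ := (div_nonneg (norm_nonneg v) hε.le).trans_lt hγ
  obtain ⟨n, hn⟩ : ∃ n, ‖(T ^ n) u‖ < ε / ‖γ‖ :=
    ((tendsto_zero_iff_norm_tendsto_zero.1 (hT u)).eventually
      (gt_mem_nhds (div_pos hε hγ₀))).exists
  obtain ⟨w, hTw, hw⟩ := hT_rightInv n v
  refine ⟨(⟨γ, hγΓ⟩, n), u + γ⁻¹ • w, hUε ?_, hVε ?_⟩
  · rw [mem_ball, dist_eq_norm, add_sub_cancel_left, norm_smul, norm_inv, inv_mul_eq_div]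
    calc ‖w‖ / ‖γ‖ ≤ ‖v‖ / ‖γ‖ := by gcongr
      _ < ε := (div_lt_iff₀ hγ₀).2 (by rwa [div_lt_iff₀' hε] at hγ)
      _ ≤ ε₁ := min_le_left _ _
  · have hγ_ne : γ ≠ 0 := norm_pos_iff.1 hγ₀
    simp only [Pi.smul_apply, map_add, map_smul, hTw, smul_add, smul_inv_smul₀ hγ_ne]
    rw [mem_ball, dist_eq_norm, add_sub_cancel_right, norm_smul]
    calc ‖γ‖ * ‖(T ^ n) u‖ < ε := by rwa [lt_div_iff₀' hγ₀] at hn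
      _ ≤ ε₂ := min_le_right _ _

end Transitivity

namespace lp

variable {α : Type*} {E : α → Type*} [∀ i, NormedAddCommGroup (E i)] {p : ℝ≥0∞} [Fact (1 ≤ p)]

theorem separableSpace [Countable α] [∀ i, SeparableSpace (E i)] (hp : p ≠ ∞) :
    SeparableSpace (lp E p) := by
  classical
  have hsingle : IsSeparable (⋃ i, range (lp.single p i : E i → lp E p)) :=
    .iUnion fun i => isSeparable_range (isometry_single i).continuous
  rw [← isSeparable_univ_iff]
  refine (hsingle.span (R := ℕ)).closure.mono fun f _ => ?_
  exact mem_closure_of_tendsto (lp.hasSum_single hp f) (Eventually.of_forall fun s =>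
    Submodule.sum_mem _ fun i _ => Submodule.subset_span (mem_iUnion.2 ⟨i, mem_range_self _⟩))

instance [Nonempty α] [∀ i, Nontrivial (E i)] : Nontrivial (lp E p) := by
  classical
  inhabit α
  obtain ⟨a, ha⟩ := exists_ne (0 : E default)
  exact ⟨⟨lp.single p default a, 0, fun h => ha (by simpa using congrArg (· default) h)⟩⟩

end lp

section BackwardShift

variable {𝕜 E : Type*} [NontriviallyNormedField 𝕜] [NormedAddCommGroup E] [NormedSpace 𝕜 E]
  {p : ℝ≥0∞} [Fact (1 ≤ p)] {B : lp (fun _ : ℕ => E) p →L[𝕜] lp (fun _ : ℕ => E) p}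
  (hB : ∀ x n, B x n = x (n + 1))
include hB

theorem backwardShift_pow_apply (x : lp (fun _ : ℕ => E) p) (n j : ℕ) :
    (B ^ n) x j = x (j + n) := by
  induction n generalizing x with
  | zero => rfl
  | succ n ih =>
    rw [pow_succ, ContinuousLinearMap.mul_def, ContinuousLinearMap.comp_apply, ih, hB, add_assoc]

theorem norm_backwardShift_pow_apply (hp : p ≠ ∞) (x : lp (fun _ : ℕ => E) p) (n : ℕ) :
    ‖(B ^ n) x‖ = (∑' j, ‖x (j + n)‖ ^ p.toReal) ^ (1 / p.toReal) := by
  simp only [lp.norm_eq_tsum_rpow ((ENNReal.toReal_pos_iff_ne_top p).2 hp),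
    backwardShift_pow_apply hB]

theorem norm_backwardShift_pow_apply_le (hp : p ≠ ∞) (x : lp (fun _ : ℕ => E) p) (n : ℕ) :
    ‖(B ^ n) x‖ ≤ ‖x‖ := by
  have hp₀ : 0 < p.toReal := (ENNReal.toReal_pos_iff_ne_top p).2 hp
  have hsum := (lp.memℓp x).summable hp₀
  rw [norm_backwardShift_pow_apply hB hp, lp.norm_eq_tsum_rpow hp₀, ← hsum.sum_add_tsum_nat_add n]
  gcongr
  exact le_add_of_nonneg_left (Finset.sum_nonneg fun j _ => by positivity)

theorem tendsto_backwardShift_pow_apply (hp : p ≠ ∞) (x : lp (fun _ : ℕ => E) p) :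
    Tendsto (fun n => (B ^ n) x) atTop (𝓝 0) := by
  have hp₀ : 0 < p.toReal := (ENNReal.toReal_pos_iff_ne_top p).2 hp
  rw [tendsto_zero_iff_norm_tendsto_zero]
  simp only [norm_backwardShift_pow_apply hB hp]
  have h := (tendsto_sum_nat_add fun j => ‖x j‖ ^ p.toReal).rpow_const (p := 1 / p.toReal)
    (Or.inr (by positivity))
  rwa [Real.zero_rpow (one_div_pos.2 hp₀).ne'] at h

theorem exists_backwardShift_pow_apply_eq (hp : p ≠ ∞) (n : ℕ) (v : lp (fun _ : ℕ => E) p) :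
    ∃ w, (B ^ n) w = v ∧ ‖w‖ ≤ ‖v‖ := by
  have hp₀ : 0 < p.toReal := (ENNReal.toReal_pos_iff_ne_top p).2 hp
  set w : ℕ → E := fun j => if n ≤ j then v (j - n) else 0
  have hw_add : ∀ j, w (j + n) = v j := fun j => by simp [w]
  have hw : Memℓp w p := by
    rw [memℓp_gen_iff hp₀, ← summable_nat_add_iff n]
    simpa only [hw_add] using (lp.memℓp v).summable hp₀
  refine ⟨⟨w, hw⟩, lp.ext (funext fun j => ?_), le_of_eq ?_⟩
  · exact (backwardShift_pow_apply hB _ n j).trans (hw_add j)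
  · rw [lp.norm_eq_tsum_rpow hp₀, lp.norm_eq_tsum_rpow hp₀,
      ← ((memℓp_gen_iff hp₀).1 hw).sum_add_tsum_nat_add n, Finset.sum_eq_zero fun j hj => ?_,
      zero_add]
    · simp only [hw_add]
    · have hjn : ¬n ≤ j := not_le.2 (Finset.mem_range.1 hj)
      simp [w, hjn, Real.zero_rpow hp₀.ne']

end BackwardShift

/-- **Proposition 2.1.** If `Γ ⊆ ℂ` is unbounded, the backward shift `B` on `ℓ²(ℕ,ℂ)`,
given by `(Bx)(n) = x(n+1)`, is `Γ`-supercyclic but not hypercyclic. -/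
theorem backwardShift_gamma_supercyclic_not_hypercyclic
    (Γ : Set ℂ) (hΓ : ¬Bornology.IsBounded Γ)
    (B : lp (fun _ : ℕ => ℂ) 2 →L[ℂ] lp (fun _ : ℕ => ℂ) 2)
    (hB : ∀ (x : lp (fun _ : ℕ => ℂ) 2) (n : ℕ), (B x : ∀ _ : ℕ, ℂ) n = (x : ∀ _ : ℕ, ℂ) (n + 1)) :
    (∃ x : lp (fun _ : ℕ => ℂ) 2,
      Dense {y : lp (fun _ : ℕ => ℂ) 2 | ∃ γ ∈ Γ, ∃ n : ℕ, y = γ • (B ^ n) x}) ∧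
    ¬∃ y : lp (fun _ : ℕ => ℂ) 2,
      Dense {z : lp (fun _ : ℕ => ℂ) 2 | ∃ n : ℕ, z = (B ^ n) y} := by
  have hp : (2 : ℝ≥0∞) ≠ ∞ := ENNReal.ofNat_ne_top
  refine ⟨?_, fun ⟨y, hy⟩ => ?_⟩
  · have htrans : IsTopologicallyTransitive fun c : Γ × ℕ => (c.1 : ℂ) • ⇑(B ^ c.2) :=
      isTopologicallyTransitive_smul_pow hΓ (tendsto_backwardShift_pow_apply hB hp)
        (exists_backwardShift_pow_apply_eq hB hp)
    have := lp.separableSpace (E := fun _ : ℕ => ℂ) hp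
    obtain ⟨x, hx⟩ := htrans.exists_dense_range fun c => (B ^ c.2).continuous.const_smul _
    refine ⟨x, hx.mono ?_⟩
    rintro _ ⟨⟨⟨γ, hγ⟩, n⟩, rfl⟩
    exact ⟨γ, hγ, n, rfl⟩
  · have hbdd : IsBounded {z | ∃ n : ℕ, z = (B ^ n) y} :=
      isBounded_iff_forall_norm_le.2 ⟨‖y‖, by
        rintro _ ⟨n, rfl⟩
        exact norm_backwardShift_pow_apply_le hB hp y n⟩
    exact NormedSpace.unbounded_univ ℂ _ (hy.closure_eq ▸ hbdd.closure)
end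

section
/- Let X be an infinite-dimensional complex Banach space, T a bounded linear operator on X, and Γ ⊆ ℂ a nonempty set that is bounded and bounded away from 0 (there exist 0 < a ≤ b with a ≤ |γ| ≤ b for all γ ∈ Γ). If x is Γ-supercyclic for T, then for every y ∈ X there exist γ in the closure of Γ and a strictly increasing sequence (n_k) of natural numbers such that γ·T^{n_k} x converges to y. -/
open Filter Topology

private lemma span_singleton_interior_empty
    {X : Type*} [NormedAddCommGroup X] [NormedSpace ℂ X]
    (hX : ¬FiniteDimensional ℂ X) (v : X) :
    interior ((Submodule.span ℂ {v} : Submodule ℂ X) : Set X) = ∅ := by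
  by_contra h
  have hne : (interior ((Submodule.span ℂ {v} : Submodule ℂ X) : Set X)).Nonempty :=
    Set.nonempty_iff_ne_empty.mpr h
  have htop : Submodule.span ℂ {v} = ⊤ :=
    (Submodule.span ℂ {v}).eq_top_of_nonempty_interior' hne
  exact hX (Module.finite_def.mpr (htop ▸ Submodule.fg_span_singleton v))

/-- **Lemma 3.3.** If `Γ ⊆ ℂ` is nonempty, bounded and bounded away from `0` and `x` is a
`Γ`-supercyclic vector for `T`, then for every `y ∈ X` there exist `γ` in the closure of `Γ`
and a strictly increasing sequence `(n_k)` of integers such that `γ·T^{n_k} x → y`. -/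
theorem gamma_supercyclic_exists_single_scalar_subsequence
    (X : Type*) [NormedAddCommGroup X] [NormedSpace ℂ X] [CompleteSpace X]
    (hX : ¬FiniteDimensional ℂ X) (T : X →L[ℂ] X) (Γ : Set ℂ)
    (hΓ : ∃ a b : ℝ, 0 < a ∧ a ≤ b ∧ ∀ γ ∈ Γ, a ≤ ‖γ‖ ∧ ‖γ‖ ≤ b)
    (hne : Γ.Nonempty)
    (x : X) (hx : Dense {y : X | ∃ γ ∈ Γ, ∃ n : ℕ, y = γ • (T ^ n) x}) :
    ∀ y : X, ∃ γ ∈ closure Γ, ∃ nk : ℕ → ℕ, StrictMono nk ∧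
      Filter.Tendsto (fun k => γ • (T ^ (nk k)) x) Filter.atTop (nhds y) := by
  obtain ⟨a, b, ha, hab, hΓab⟩ := hΓ
  intro y
  -- Step 1: for every `N`, the tail part of the orbit (with powers `≥ N`) is still dense.
  have hdense : ∀ N : ℕ, Dense {z : X | ∃ γ ∈ Γ, ∃ n : ℕ, N ≤ n ∧ z = γ • (T ^ n) x} := by
    intro N
    induction N with
    | zero => simpa [Nat.zero_le] using hx
    | succ N ih =>
      set S : Set X := {z : X | ∃ γ ∈ Γ, ∃ n : ℕ, N + 1 ≤ n ∧ z = γ • (T ^ n) x} with hS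
      set L : Set X := ((Submodule.span ℂ {(T ^ N) x} : Submodule ℂ X) : Set X) with hL
      have hLclosed : IsClosed L := (Submodule.span ℂ {(T ^ N) x}).closed_of_finiteDimensional
      have hLint : interior L = ∅ := span_singleton_interior_empty hX _
      have hsub : {z : X | ∃ γ ∈ Γ, ∃ n : ℕ, N ≤ n ∧ z = γ • (T ^ n) x} ⊆ S ∪ L := by
        rintro z ⟨γ, hγ, n, hn, rfl⟩
        rcases Nat.lt_or_ge n (N + 1) with h | h
        · have : n = N := Nat.le_antisymm (Nat.lt_succ_iff.mp h) hn
          subst this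
          exact Or.inr (Submodule.mem_span_singleton.mpr ⟨γ, rfl⟩)
        · exact Or.inl ⟨γ, hγ, n, h, rfl⟩
      rw [dense_iff_inter_open]
      intro U hU hUne
      have hUsub : U ⊆ closure S ∪ L := by
        intro z hz
        have hz' : z ∈ closure {z : X | ∃ γ ∈ Γ, ∃ n : ℕ, N ≤ n ∧ z = γ • (T ^ n) x} :=
          ih z
        have : z ∈ closure (S ∪ L) := closure_mono hsub hz'
        rwa [closure_union, hLclosed.closure_eq] at this
      have hULopen : IsOpen (U \ L) := hU.sdiff hLclosed
      have hULne : (U \ L).Nonempty := by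
        by_contra hcon
        have : U ⊆ L := by
          intro z hz
          by_contra hzL
          exact hcon ⟨z, hz, hzL⟩
        have : U ⊆ interior L := (hU.subset_interior_iff).mpr this
        rw [hLint] at this
        exact hUne.ne_empty (Set.subset_empty_iff.mp this)
      obtain ⟨z, hzU, hzL⟩ := hULne
      have hzS : z ∈ closure S := by
        rcases hUsub hzU with h | h
        · exact h
        · exact absurd h hzL
      obtain ⟨w, hwUL, hwS⟩ := mem_closure_iff_nhds.mp hzS (U \ L)
        (hULopen.mem_nhds ⟨hzU, hzL⟩)
      exact ⟨w, hwUL.1, hwS⟩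
  -- Step 2: recursively choose approximating pairs with strictly increasing powers.
  have key : ∀ N k : ℕ, ∃ p : ℕ × ℂ, N ≤ p.1 ∧ p.2 ∈ Γ ∧
      ‖p.2 • (T ^ p.1) x - y‖ < 1 / (k + 1) := by
    intro N k
    have hpos : (0 : ℝ) < 1 / (k + 1) := by positivity
    have hball : (Metric.ball y (1 / (k + 1))).Nonempty := Metric.nonempty_ball.mpr hpos
    obtain ⟨z, hzS, hzB⟩ := (hdense N).exists_mem_open Metric.isOpen_ball hball
    obtain ⟨γ, hγ, n, hn, rfl⟩ := hzS
    refine ⟨(n, γ), hn, hγ, ?_⟩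
    simpa [dist_eq_norm] using hzB
  choose p hp1 hp2 hp3 using key
  set f : ℕ → ℕ × ℂ := fun k =>
    Nat.rec (p 0 0) (fun k ih => p (ih.1 + 1) (k + 1)) k with hf
  have hfs : ∀ k, f (k + 1) = p ((f k).1 + 1) (k + 1) := fun _ => rfl
  have hmono : StrictMono fun k => (f k).1 := by
    apply strictMono_nat_of_lt_succ
    intro k
    rw [hfs]
    exact Nat.lt_of_lt_of_le (Nat.lt_succ_self _) (hp1 _ _)
  have hfΓ : ∀ k, (f k).2 ∈ Γ := by
    intro k
    cases k with
    | zero => exact hp2 0 0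
    | succ k => rw [hfs]; exact hp2 _ _
  have hferr : ∀ k, ‖(f k).2 • (T ^ (f k).1) x - y‖ < 1 / (k + 1) := by
    intro k
    cases k with
    | zero => exact hp3 0 0
    | succ k => rw [hfs]; exact hp3 _ _
  -- Step 3: extract a convergent subsequence of the scalars.
  have hK : IsCompact (closure Γ) := by
    apply Metric.isCompact_of_isClosed_isBounded isClosed_closure
    refine Bornology.IsBounded.closure ?_
    refine (Metric.isBounded_closedBall (x := (0 : ℂ)) (r := b)).subset ?_
    intro γ hγ
    simpa [Metric.mem_closedBall, dist_eq_norm] using (hΓab γ hγ).2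
  obtain ⟨γ, hγcl, φ, hφ, hγtend⟩ := hK.tendsto_subseq
    (x := fun k => (f k).2) (fun k => subset_closure (hfΓ k))
  refine ⟨γ, hγcl, fun j => (f (φ j)).1, hmono.comp hφ, ?_⟩
  -- Step 4: prove the convergence.
  set c : ℕ → ℂ := fun j => (f (φ j)).2 with hc
  set v : ℕ → X := fun j => (T ^ (f (φ j)).1) x with hv
  have herr : ∀ j, ‖c j • v j - y‖ < 1 / (j + 1) := by
    intro j
    calc ‖c j • v j - y‖ < 1 / (φ j + 1) := hferr (φ j)
    _ ≤ 1 / (j + 1) := by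
        apply one_div_le_one_div_of_le (by positivity)
        have h : j ≤ φ j := hφ.le_apply
        have h' : (j : ℝ) ≤ (φ j : ℝ) := by exact_mod_cast h
        linarith
  have hcv : Tendsto (fun j => c j • v j) atTop (𝓝 y) := by
    rw [tendsto_iff_norm_sub_tendsto_zero]
    refine squeeze_zero (fun j => norm_nonneg _) (fun j => (herr j).le) ?_
    exact tendsto_one_div_add_atTop_nhds_zero_nat
  have hvb : ∀ j, ‖v j‖ ≤ (‖y‖ + 1) / a := by
    intro j
    have h1 : ‖c j • v j‖ ≤ ‖y‖ + 1 := by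
      have := herr j
      have h2 : (1 : ℝ) / (j + 1) ≤ 1 := by
        rw [div_le_one (by positivity)]
        linarith [Nat.cast_nonneg (α := ℝ) j]
      calc ‖c j • v j‖ = ‖(c j • v j - y) + y‖ := by rw [sub_add_cancel]
      _ ≤ ‖c j • v j - y‖ + ‖y‖ := norm_add_le _ _
      _ ≤ ‖y‖ + 1 := by linarith
    have h3 : a ≤ ‖c j‖ := (hΓab _ (hfΓ (φ j))).1
    rw [le_div_iff₀ ha]
    calc ‖v j‖ * a ≤ ‖v j‖ * ‖c j‖ := by
          exact mul_le_mul_of_nonneg_left h3 (norm_nonneg _)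
    _ = ‖c j • v j‖ := by rw [norm_smul, mul_comm]
    _ ≤ ‖y‖ + 1 := h1
  have hdiff : Tendsto (fun j => (γ - c j) • v j) atTop (𝓝 0) := by
    have hb : ∀ j, ‖(γ - c j) • v j‖ ≤ ‖γ - c j‖ * ((‖y‖ + 1) / a) := by
      intro j
      rw [norm_smul]
      exact mul_le_mul_of_nonneg_left (hvb j) (norm_nonneg _)
    refine squeeze_zero_norm hb ?_
    · have h0 : Tendsto (fun j => ‖γ - c j‖) atTop (𝓝 0) := by
        have : Tendsto (fun j => γ - c j) atTop (𝓝 0) := by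
          simpa using (tendsto_const_nhds (x := γ)).sub hγtend
        simpa using this.norm
      simpa using h0.mul_const ((‖y‖ + 1) / a)
  have : Tendsto (fun j => (γ - c j) • v j + c j • v j) atTop (𝓝 (0 + y)) :=
    hdiff.add hcv
  simpa [sub_smul, sub_add_cancel, hv] using this
end

section
/- Let X be an infinite-dimensional complex Banach space, T a bounded linear operator on X, and Γ ⊆ ℂ a nonempty set that is bounded and bounded away from 0 (there exist 0 < a ≤ b with a ≤ |γ| ≤ b for all γ ∈ Γ). If x is Γ-supercyclic for T, then for every n ∈ ℕ and every y ∈ X there exists γ in the closure of Γ such that y belongs to the closure of {γ·T^{n+m} x : m ∈ ℕ}; equivalently, for every n ∈ ℕ, the union over γ ∈ closure(Γ) of the closures of Orb(γ·T^n x, T) equals X. -/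
/-!
Removing the first `n` iterates of the orbit removes only points of a finite-dimensional
subspace, which is closed with empty interior in an infinite-dimensional space, so the truncated
orbit `Γ • {T^(n+m) x}` is still dense. Given `y`, pick `γⱼ • T^(n+mⱼ) x → y` with `γⱼ ∈ Γ`;
since `Γ` is bounded, a subsequence `γⱼ → γ ∈ closure Γ`, and `γ ≠ 0` because `Γ` is bounded
away from `0`. Then `T^(n+mⱼ) x → γ⁻¹ • y` along it, hence `γ • T^(n+mⱼ) x → y`.
-/

open Filter Topology Pointwise Set

theorem Dense.of_subset_union_of_isClosed {X : Type*} [TopologicalSpace X] {s t F : Set X}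
    (hs : Dense s) (hst : s ⊆ t ∪ F) (hF : IsClosed F) (hF' : interior F = ∅) : Dense t :=
  (hs.inter_of_isOpen_right (interior_eq_empty_iff_dense_compl.mp hF') hF.isOpen_compl).mono
    fun _ hz => (hst hz.1).resolve_right hz.2

theorem Submodule.interior_eq_empty_of_finiteDimensional {𝕜 E : Type*}
    [NontriviallyNormedField 𝕜] [NormedAddCommGroup E] [NormedSpace 𝕜 E]
    (hE : ¬FiniteDimensional 𝕜 E) (F : Submodule 𝕜 E) [FiniteDimensional 𝕜 F] :
    interior (F : Set E) = ∅ := by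
  by_contra hF
  have hF_top : F = ⊤ := F.eq_top_of_nonempty_interior' (nonempty_iff_ne_empty.mpr hF)
  subst hF_top
  exact hE Submodule.topEquiv.finiteDimensional

theorem exists_mem_closure_and_mem_closure_smul_set {𝕜 E : Type*} [NormedField 𝕜] [ProperSpace 𝕜]
    [TopologicalSpace E] [FrechetUrysohnSpace E] [MulAction 𝕜 E] [ContinuousSMul 𝕜 E]
    {Γ : Set 𝕜} {S : Set E} {y : E} (hΓ : Bornology.IsBounded Γ) (hΓ0 : (0 : 𝕜) ∉ closure Γ)
    (hy : y ∈ closure (Γ • S)) : ∃ γ ∈ closure Γ, y ∈ closure (γ • S) := by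
  obtain ⟨u, hu, hu_lim⟩ := mem_closure_iff_seq_limit.mp hy
  choose c hc s hs hcs using fun j => Set.mem_smul.mp (hu j)
  obtain ⟨γ, hγ, φ, hφ, hc_lim⟩ := tendsto_subseq_of_bounded hΓ hc
  have hγ0 : γ ≠ 0 := by rintro rfl; exact hΓ0 hγ
  refine ⟨γ, hγ, mem_closure_iff_seq_limit.mpr
    ⟨fun j => γ • s (φ j), fun j => smul_mem_smul_set (hs _), ?_⟩⟩
  have hs_eq : ∀ j, s j = (c j)⁻¹ • u j := fun j => by
    rw [← hcs, inv_smul_smul₀ fun h => hΓ0 (subset_closure (h ▸ hc j))]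
  have hs_lim : Tendsto (s ∘ φ) atTop (𝓝 (γ⁻¹ • y)) := by
    simpa only [Function.comp_def, hs_eq] using
      (hc_lim.inv₀ hγ0).smul (hu_lim.comp hφ.tendsto_atTop)
  have := hs_lim.const_smul γ
  rwa [smul_inv_smul₀ hγ0] at this

theorem ContinuousLinearMap.dense_smul_orbit_tail {𝕜 E : Type*} [NontriviallyNormedField 𝕜]
    [CompleteSpace 𝕜] [NormedAddCommGroup E] [NormedSpace 𝕜 E] (hE : ¬FiniteDimensional 𝕜 E)
    (T : E →L[𝕜] E) {Γ : Set 𝕜} {x : E} (hx : Dense (Γ • range fun m => (T ^ m) x)) (n : ℕ) :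
    Dense (Γ • range fun m => (T ^ (n + m)) x) := by
  let F := Submodule.span 𝕜 ((fun i => (T ^ i) x) '' Iio n)
  have : FiniteDimensional 𝕜 F := FiniteDimensional.span_of_finite 𝕜 ((finite_Iio n).image _)
  refine hx.of_subset_union_of_isClosed ?_ F.closed_of_finiteDimensional
    (F.interior_eq_empty_of_finiteDimensional hE)
  rintro _ ⟨γ, hγ, _, ⟨j, rfl⟩, rfl⟩
  rcases le_or_gt n j with hj | hj
  · exact Or.inl ⟨γ, hγ, _, ⟨j - n, by simp only [Nat.add_sub_cancel' hj]⟩, rfl⟩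
  · exact Or.inr (F.smul_mem γ (Submodule.subset_span ⟨j, hj, rfl⟩))

theorem gamma_supercyclic_union_closure_orbits_general
    (X : Type*) [NormedAddCommGroup X] [NormedSpace ℂ X]
    (hX : ¬FiniteDimensional ℂ X) (T : X →L[ℂ] X) (Γ : Set ℂ)
    (hΓ : ∃ a b : ℝ, 0 < a ∧ a ≤ b ∧ ∀ γ ∈ Γ, a ≤ ‖γ‖ ∧ ‖γ‖ ≤ b)
    (x : X) (hx : Dense {y : X | ∃ γ ∈ Γ, ∃ n : ℕ, y = γ • (T ^ n) x}) :
    ∀ n : ℕ, ∀ y : X, ∃ γ ∈ closure Γ,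
      y ∈ closure {w : X | ∃ m : ℕ, w = γ • (T ^ (n + m)) x} := by
  obtain ⟨a, b, ha, -, hΓab⟩ := hΓ
  have hΓ_bdd : Bornology.IsBounded Γ :=
    isBounded_iff_forall_norm_le.mpr ⟨b, fun γ hγ => (hΓab γ hγ).2⟩
  have hΓ0 : (0 : ℂ) ∉ closure Γ := fun h => by
    have : a ≤ ‖(0 : ℂ)‖ := closure_minimal (t := {γ : ℂ | a ≤ ‖γ‖}) (fun γ hγ => (hΓab γ hγ).1)
      (isClosed_le continuous_const continuous_norm) h
    exact ha.not_ge (by simpa using this)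
  have horbit : Dense (Γ • range fun m => (T ^ m) x) := by
    convert hx using 1
    ext
    simp only [Set.mem_smul, exists_range_iff, mem_ofPred_eq, eq_comm]
  intro n y
  obtain ⟨γ, hγ, hy⟩ := exists_mem_closure_and_mem_closure_smul_set hΓ_bdd hΓ0
    (T.dense_smul_orbit_tail hX horbit n y)
  refine ⟨γ, hγ, ?_⟩
  convert hy using 2
  ext
  simp only [smul_set_range, mem_range, mem_ofPred_eq, eq_comm]

/-- **Corollary 3.4.** If `Γ ⊆ ℂ` is nonempty, bounded and bounded away from `0` and `x` is a
`Γ`-supercyclic vector for `T`, then for every `n ≥ 0`,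
`⋃_{γ ∈ closure Γ} closure(Orb(γ·T^n x, T)) = X`. -/
theorem gamma_supercyclic_union_closure_orbits
    (X : Type*) [NormedAddCommGroup X] [NormedSpace ℂ X] [CompleteSpace X]
    (hX : ¬FiniteDimensional ℂ X) (T : X →L[ℂ] X) (Γ : Set ℂ)
    (hΓ : ∃ a b : ℝ, 0 < a ∧ a ≤ b ∧ ∀ γ ∈ Γ, a ≤ ‖γ‖ ∧ ‖γ‖ ≤ b)
    (hne : Γ.Nonempty)
    (x : X) (hx : Dense {y : X | ∃ γ ∈ Γ, ∃ n : ℕ, y = γ • (T ^ n) x}) :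
    ∀ n : ℕ, ∀ y : X, ∃ γ ∈ closure Γ,
      y ∈ closure {w : X | ∃ m : ℕ, w = γ • (T ^ (n + m)) x} :=
  gamma_supercyclic_union_closure_orbits_general X hX T Γ hΓ x hx
end

section
/- Let X be an infinite-dimensional complex Banach space and T a bounded linear operator on X. If T is Γ-supercyclic for some Γ ⊆ ℂ whose nonzero part Γ \ {0} is nonempty, with Γ bounded and bounded away from 0 (there exist 0 < a ≤ b with a ≤ |γ| ≤ b for all γ ∈ Γ), then for every nonzero polynomial p ∈ ℂ[X], the operator p(T) (obtained by evaluating p at T) has dense range. -/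
/-!
If some `T - μ` failed to have dense range, Hahn–Banach would give a nonzero functional `f` with
`f ∘ T = μ • f`. Being surjective, `f` maps the dense set `{γ • Tⁿ x}` onto a dense subset
`{γ * μⁿ * f x}` of `ℂ`; but that set is bounded when `‖μ‖ ≤ 1` and misses a disc around `0`
when `‖μ‖ > 1`. Over `ℂ` a nonzero `p` factors as `c * ∏ (X - μᵢ)`, so `p(T)` is a composition
of operators with dense range.
-/

open Polynomial

theorem Submodule.exists_dual_ne_zero_of_not_dense {𝕜 E : Type*} [RCLike 𝕜]
    [NormedAddCommGroup E] [NormedSpace 𝕜 E] (S : Submodule 𝕜 E) (hS : ¬Dense (S : Set E)) :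
    ∃ f : StrongDual 𝕜 E, f ≠ 0 ∧ ∀ x ∈ S, f x = 0 := by
  set M := S.topologicalClosure
  -- makes `E ⧸ M` a normed space, hence one with separating dual
  have : IsClosed (M : Set E) := S.isClosed_topologicalClosure
  obtain ⟨x₀, hx₀⟩ : ∃ x₀, x₀ ∉ M := by
    by_contra! h
    exact hS fun x => by simpa only [M, ← SetLike.mem_coe, S.topologicalClosure_coe] using h x
  obtain ⟨g, hg⟩ := SeparatingDual.exists_ne_zero (R := 𝕜)
    (mt (Submodule.Quotient.mk_eq_zero M).mp hx₀)
  refine ⟨g.comp M.mkQL, fun h => hg (by simpa using congr($h x₀)), fun x hx => ?_⟩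
  simp [(Submodule.Quotient.mk_eq_zero M).mpr (S.le_topologicalClosure hx)]

theorem not_dense_setOf_mul_pow_mul {𝕜 : Type*} [NontriviallyNormedField 𝕜] {Γ : Set 𝕜}
    {a b : ℝ} (ha : 0 < a) (hΓ : ∀ γ ∈ Γ, a ≤ ‖γ‖ ∧ ‖γ‖ ≤ b) (μ c : 𝕜) :
    ¬Dense {w : 𝕜 | ∃ γ ∈ Γ, ∃ n : ℕ, w = γ * (μ ^ n * c)} := by
  intro hdense
  by_cases hsmall : ‖μ‖ ≤ 1 ∨ c = 0
  · refine NormedSpace.unbounded_univ 𝕜 𝕜 ?_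
    rw [← hdense.closure_eq]
    refine (Metric.isBounded_closedBall (x := 0) (r := b * ‖c‖)).subset ?_ |>.closure
    rintro _ ⟨γ, hγ, n, rfl⟩
    rw [mem_closedBall_zero_iff, norm_mul, norm_mul, norm_pow]
    rcases hsmall with hμ | rfl
    · have hγb := (hΓ γ hγ).2
      calc ‖γ‖ * (‖μ‖ ^ n * ‖c‖) ≤ b * (1 * ‖c‖) := by
            gcongr
            · exact (norm_nonneg γ).trans hγb
            · exact pow_le_one₀ (norm_nonneg μ) hμ
        _ = b * ‖c‖ := by ring
    · simp
  · push Not at hsmall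
    obtain ⟨hμ, hc⟩ := hsmall
    obtain ⟨_, hball, γ, hγ, n, rfl⟩ := hdense.inter_open_nonempty
      (Metric.ball 0 (a * ‖c‖)) Metric.isOpen_ball
      ⟨0, Metric.mem_ball_self (by positivity)⟩
    rw [mem_ball_zero_iff, norm_mul, norm_mul, norm_pow] at hball
    have : a * (1 * ‖c‖) ≤ ‖γ‖ * (‖μ‖ ^ n * ‖c‖) := by
      gcongr
      · exact (hΓ γ hγ).1
      · exact one_le_pow₀ hμ.le
    linarith

theorem ContinuousLinearMap.denseRange_sub_algebraMap_of_dense_smul_orbit {𝕜 E : Type*}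
    [RCLike 𝕜] [NormedAddCommGroup E] [NormedSpace 𝕜 E] {T : E →L[𝕜] E} {Γ : Set 𝕜} {a b : ℝ}
    (ha : 0 < a) (hΓ : ∀ γ ∈ Γ, a ≤ ‖γ‖ ∧ ‖γ‖ ≤ b) {x : E}
    (hx : Dense {y : E | ∃ γ ∈ Γ, ∃ n : ℕ, y = γ • (T ^ n) x}) (μ : 𝕜) :
    DenseRange (T - algebraMap 𝕜 (E →L[𝕜] E) μ) := by
  by_contra hdense
  obtain ⟨f, hf0, hf⟩ := Submodule.exists_dual_ne_zero_of_not_dense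
    (LinearMap.range ((T - algebraMap 𝕜 (E →L[𝕜] E) μ : E →L[𝕜] E) : E →ₗ[𝕜] E)) hdense
  have hfT (y : E) : f (T y) = μ * f y := by
    simpa [sub_eq_zero] using hf _ (LinearMap.mem_range_self _ y)
  have hfTn (n : ℕ) (y : E) : f ((T ^ n) y) = μ ^ n * f y := by
    induction n generalizing y with
    | zero => simp
    | succ n ih => rw [pow_succ, mul_apply_eq_comp, ih, hfT, pow_succ, mul_assoc]
  have hf_surj : Function.Surjective f :=
    LinearMap.surjective (f := (f : E →ₗ[𝕜] 𝕜)) (by exact_mod_cast hf0)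
  refine not_dense_setOf_mul_pow_mul ha hΓ μ (f x) ?_
  convert hf_surj.denseRange.dense_image f.continuous hx using 1
  ext w
  simp only [Set.mem_image]
  constructor
  · rintro ⟨γ, hγ, n, rfl⟩
    exact ⟨_, ⟨γ, hγ, n, rfl⟩, by rw [map_smul, hfTn, smul_eq_mul]⟩
  · rintro ⟨_, ⟨γ, hγ, n, rfl⟩, rfl⟩
    exact ⟨γ, hγ, n, by rw [map_smul, hfTn, smul_eq_mul]⟩

theorem Polynomial.denseRange_aeval_of_forall_denseRange_sub {𝕜 X : Type*} [Field 𝕜]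
    [IsAlgClosed 𝕜] [AddCommGroup X] [Module 𝕜 X] [TopologicalSpace X] [IsTopologicalAddGroup X]
    [ContinuousConstSMul 𝕜 X] {T : X →L[𝕜] X}
    (hT : ∀ μ : 𝕜, DenseRange (T - algebraMap 𝕜 (X →L[𝕜] X) μ)) {p : 𝕜[X]} (hp : p ≠ 0) :
    DenseRange (aeval T p) := by
  have hmul {q r : 𝕜[X]} (hq : DenseRange (aeval T q)) (hr : DenseRange (aeval T r)) :
      DenseRange (aeval T (q * r)) := by
    rw [map_mul]
    exact hq.comp hr (aeval T q).continuous
  have hlc : DenseRange (aeval T (C p.leadingCoeff)) := by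
    refine Function.Surjective.denseRange fun z => ⟨p.leadingCoeff⁻¹ • z, ?_⟩
    simp [smul_smul, leadingCoeff_ne_zero.mpr hp]
  rw [← C_leadingCoeff_mul_prod_multiset_X_sub_C (IsAlgClosed.card_roots_eq_natDegree (p := p))]
  refine hmul hlc (Multiset.prod_induction (fun q => DenseRange (aeval T q)) _
    (fun _ _ => hmul) (by simpa using denseRange_id) ?_)
  simp only [Multiset.mem_map]
  rintro _ ⟨μ, -, rfl⟩
  simpa using hT μ

theorem gamma_supercyclic_polynomial_denseRange_general
    (X : Type*) [NormedAddCommGroup X] [NormedSpace ℂ X]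
    (T : X →L[ℂ] X) (Γ : Set ℂ)
    (hΓ : ∃ a b : ℝ, 0 < a ∧ a ≤ b ∧ ∀ γ ∈ Γ, a ≤ ‖γ‖ ∧ ‖γ‖ ≤ b)
    (hsc : ∃ x : X, Dense {y : X | ∃ γ ∈ Γ, ∃ n : ℕ, y = γ • (T ^ n) x}) :
    ∀ p : Polynomial ℂ, p ≠ 0 → Dense (Set.range fun y : X => (Polynomial.aeval T p) y) := by
  obtain ⟨a, b, ha, -, hΓ⟩ := hΓ
  obtain ⟨x, hx⟩ := hsc
  intro p hp
  exact denseRange_aeval_of_forall_denseRange_sub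
    (T.denseRange_sub_algebraMap_of_dense_smul_orbit ha hΓ hx) hp

/-- **Lemma 3.5.** If `T` is `Γ`-supercyclic with `Γ \ {0}` nonempty and `Γ` bounded and
bounded away from `0`, then `p(T)` has dense range for every nonzero polynomial `p`. -/
theorem gamma_supercyclic_polynomial_denseRange
    (X : Type*) [NormedAddCommGroup X] [NormedSpace ℂ X] [CompleteSpace X]
    (hX : ¬FiniteDimensional ℂ X) (T : X →L[ℂ] X) (Γ : Set ℂ)
    (hne : (Γ \ {0}).Nonempty)
    (hΓ : ∃ a b : ℝ, 0 < a ∧ a ≤ b ∧ ∀ γ ∈ Γ, a ≤ ‖γ‖ ∧ ‖γ‖ ≤ b)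
    (hsc : ∃ x : X, Dense {y : X | ∃ γ ∈ Γ, ∃ n : ℕ, y = γ • (T ^ n) x}) :
    ∀ p : Polynomial ℂ, p ≠ 0 → Dense (Set.range fun y : X => (Polynomial.aeval T p) y) :=
  gamma_supercyclic_polynomial_denseRange_general X T Γ hΓ hsc
end

section
/- Let X be an infinite-dimensional complex Banach space, T a bounded linear operator on X, and b > 1. Suppose x ∈ X is [1,b]𝕋-supercyclic for T and the closure of Orb(𝕋x,T) intersected with [1,b]𝕋x equals 𝕋x ∪ b𝕋x. Then every vector y ∈ X that is [1,b]𝕋-supercyclic for T satisfies: the closure of Orb(𝕋y,T) intersected with [1,b]𝕋y equals 𝕋y ∪ b𝕋y. -/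
open Set Filter Topology

namespace AnnulusSC

variable {X : Type*} [NormedAddCommGroup X] [NormedSpace ℂ X]

/-- The closure of the `𝕋`-orbit of `v` under `T`. -/
def C (T : X →L[ℂ] X) (v : X) : Set X :=
  closure {w : X | ∃ z : ℂ, ‖z‖ = 1 ∧ ∃ n : ℕ, w = z • (T ^ n) v}

lemma self_mem_C (T : X →L[ℂ] X) (v : X) : v ∈ C T v :=
  subset_closure ⟨1, by simp, 0, by simp⟩

lemma smul_pow_mem_C (T : X →L[ℂ] X) (v : X) {w : X} (hw : w ∈ C T v)
    {z : ℂ} (hz : ‖z‖ = 1) (n : ℕ) : z • (T ^ n) w ∈ C T v := by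
  have hcont : Continuous fun u : X => z • (T ^ n) u :=
    ((T ^ n).continuous).const_smul z
  have hmaps : MapsTo (fun u : X => z • (T ^ n) u)
      {w : X | ∃ z : ℂ, ‖z‖ = 1 ∧ ∃ m : ℕ, w = z • (T ^ m) v}
      {w : X | ∃ z : ℂ, ‖z‖ = 1 ∧ ∃ m : ℕ, w = z • (T ^ m) v} := by
    rintro u ⟨z', hz', m, rfl⟩
    refine ⟨z * z', by rw [norm_mul, hz, hz', one_mul], n + m, ?_⟩
    simp only [map_smul, smul_smul]
    rw [pow_add, ContinuousLinearMap.mul_apply]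
  exact map_mem_closure (f := fun u : X => z • (T ^ n) u) hcont hw hmaps

lemma smul_mem_C (T : X →L[ℂ] X) {v w : X} {a : ℂ}
    (ha : a • w ∈ C T v) {c : X} (hc : c ∈ C T w) : a • c ∈ C T v := by
  have hcont : Continuous fun u : X => a • u := continuous_const_smul a
  have hmaps : MapsTo (fun u : X => a • u)
      {u : X | ∃ z : ℂ, ‖z‖ = 1 ∧ ∃ m : ℕ, u = z • (T ^ m) w} (C T v) := by
    rintro u ⟨z, hz, m, rfl⟩
    have h1 := smul_pow_mem_C T v ha hz m
    have h2 : z • (T ^ m) (a • w) = a • (z • (T ^ m) w) := by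
      rw [map_smul, smul_smul, smul_smul, mul_comm]
    rwa [h2] at h1
  have hcl : IsClosed (C T v) := isClosed_closure
  exact hcl.closure_subset (map_mem_closure hcont hc hmaps)

lemma exists_annulus_inv_smul (T : X →L[ℂ] X) (v : X) {b : ℝ} (hb : 1 < b)
    (hd : Dense {w : X | ∃ t ∈ Icc (1 : ℝ) b, ∃ z : ℂ, ‖z‖ = 1 ∧
      ∃ n : ℕ, w = ((t : ℂ) * z) • (T ^ n) v}) (w : X) :
    ∃ c : ℂ, ‖c‖ ∈ Icc (1 : ℝ) b ∧ c⁻¹ • w ∈ C T v := by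
  obtain ⟨f, hfD, hfw⟩ := mem_closure_iff_seq_limit.1 (hd w)
  choose t ht z hz n hfn using hfD
  set c : ℕ → ℂ := fun k => (t k : ℂ) * z k with hc
  have hcK : ∀ k, c k ∈ {c : ℂ | ‖c‖ ∈ Icc (1 : ℝ) b} := by
    intro k
    have ht0 : (0:ℝ) ≤ t k := le_trans zero_le_one (ht k).1
    simp only [hc, mem_setOf_eq, norm_mul, Complex.norm_real, hz k, mul_one,
      Real.norm_eq_abs, abs_of_nonneg ht0]
    exact ht k
  have hK : IsCompact {c : ℂ | ‖c‖ ∈ Icc (1 : ℝ) b} := by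
    refine (isCompact_closedBall (0:ℂ) b).of_isClosed_subset
      (isClosed_Icc.preimage continuous_norm) ?_
    intro c hcmem
    simpa [Metric.mem_closedBall, dist_zero_right] using hcmem.2
  obtain ⟨c₀, hc₀, φ, hφ, hconv⟩ := hK.tendsto_subseq hcK
  have hc0ne : c₀ ≠ 0 := by
    intro h
    rw [h] at hc₀
    simp only [mem_setOf_eq, norm_zero] at hc₀
    linarith [hc₀.1]
  refine ⟨c₀, hc₀, ?_⟩
  have hckne : ∀ k, c k ≠ 0 := by
    intro k h
    have h2 := hcK k
    rw [h] at h2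
    simp only [mem_setOf_eq, norm_zero] at h2
    linarith [h2.1]
  have h1 : Tendsto (fun k => (c (φ k))⁻¹ • f (φ k)) atTop (𝓝 (c₀⁻¹ • w)) :=
    (hconv.inv₀ hc0ne).smul (hfw.comp hφ.tendsto_atTop)
  have h2 : ∀ k, (c (φ k))⁻¹ • f (φ k) ∈
      {w : X | ∃ z : ℂ, ‖z‖ = 1 ∧ ∃ m : ℕ, w = z • (T ^ m) v} := by
    intro k
    refine ⟨1, by simp, n (φ k), ?_⟩
    rw [hfn (φ k), smul_smul, inv_mul_cancel₀ (hckne (φ k)), one_smul]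
  exact mem_closure_of_tendsto h1 (Eventually.of_forall h2)

lemma exists_real_scale (T : X →L[ℂ] X) (v : X) {b : ℝ} (hb : 1 < b)
    (hd : Dense {w : X | ∃ t ∈ Icc (1 : ℝ) b, ∃ z : ℂ, ‖z‖ = 1 ∧
      ∃ n : ℕ, w = ((t : ℂ) * z) • (T ^ n) v}) (ρ : ℝ) :
    ∃ u, u ∈ Icc (1 : ℝ) b ∧ ((ρ / u : ℝ) : ℂ) • v ∈ C T v := by
  obtain ⟨c, hcN, hcmem⟩ := exists_annulus_inv_smul T v hb hd ((ρ : ℂ) • v)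
  have hc0 : c ≠ 0 := by
    intro h
    rw [h] at hcN
    simp only [norm_zero, mem_Icc] at hcN
    linarith [hcN.1]
  refine ⟨‖c‖, hcN, ?_⟩
  have hzunit : ‖c / (‖c‖ : ℂ)‖ = 1 := by
    rw [norm_div, Complex.norm_real, Real.norm_eq_abs, abs_norm,
      div_self (norm_ne_zero_iff.2 hc0)]
  have hmem := smul_pow_mem_C T v hcmem hzunit 0
  have key : (c / (‖c‖ : ℂ)) • ((T ^ 0) (c⁻¹ • ((ρ : ℂ) • v))) =
      ((ρ / ‖c‖ : ℝ) : ℂ) • v := by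
    rw [pow_zero, ContinuousLinearMap.one_apply, smul_smul, smul_smul]
    congr 1
    push_cast
    field_simp
  rwa [key] at hmem

end AnnulusSC

set_option maxHeartbeats 1000000 in
/-- **Lemma 3.8.** If `x` is `[1,b]𝕋`-supercyclic for `T` with
`closure(Orb(𝕋x,T)) ∩ [1,b]𝕋x = 𝕋x ∪ b𝕋x`, then every `[1,b]𝕋`-supercyclic vector `y`
satisfies `closure(Orb(𝕋y,T)) ∩ [1,b]𝕋y = 𝕋y ∪ b𝕋y`. -/
theorem annulus_supercyclic_exceptional_transfers
    (X : Type*) [NormedAddCommGroup X] [NormedSpace ℂ X] [CompleteSpace X]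
    (hX : ¬FiniteDimensional ℂ X) (T : X →L[ℂ] X) (b : ℝ) (hb : 1 < b)
    (x : X)
    (hx : Dense {y : X | ∃ t ∈ Set.Icc (1 : ℝ) b, ∃ z : ℂ, ‖z‖ = 1 ∧
      ∃ n : ℕ, y = ((t : ℂ) * z) • (T ^ n) x})
    (hexc : closure {y : X | ∃ z : ℂ, ‖z‖ = 1 ∧ ∃ n : ℕ, y = z • (T ^ n) x} ∩
        {y : X | ∃ t ∈ Set.Icc (1 : ℝ) b, ∃ z : ℂ, ‖z‖ = 1 ∧ y = ((t : ℂ) * z) • x} =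
      {y : X | ∃ z : ℂ, ‖z‖ = 1 ∧ y = z • x} ∪
        {y : X | ∃ z : ℂ, ‖z‖ = 1 ∧ y = ((b : ℂ) * z) • x}) :
    ∀ y : X,
      Dense {w : X | ∃ t ∈ Set.Icc (1 : ℝ) b, ∃ z : ℂ, ‖z‖ = 1 ∧
        ∃ n : ℕ, w = ((t : ℂ) * z) • (T ^ n) y} →
      closure {w : X | ∃ z : ℂ, ‖z‖ = 1 ∧ ∃ n : ℕ, w = z • (T ^ n) y} ∩
          {w : X | ∃ t ∈ Set.Icc (1 : ℝ) b, ∃ z : ℂ, ‖z‖ = 1 ∧ w = ((t : ℂ) * z) • y} =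
        {w : X | ∃ z : ℂ, ‖z‖ = 1 ∧ w = z • y} ∪
          {w : X | ∃ z : ℂ, ‖z‖ = 1 ∧ w = ((b : ℂ) * z) • y} := by
  intro y hy
  classical
  have hb0 : (0:ℝ) < b := lt_trans zero_lt_one hb
  -- the space is nontrivial
  obtain ⟨v₀, hv₀⟩ : ∃ v : X, v ≠ 0 := by
    by_contra h
    push_neg at h
    haveI : Subsingleton X := ⟨fun a c => by rw [h a, h c]⟩
    exact hX inferInstance
  -- supercyclic vectors are nonzero
  have hne : ∀ v : X, Dense {w : X | ∃ t ∈ Set.Icc (1 : ℝ) b, ∃ z : ℂ, ‖z‖ = 1 ∧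
      ∃ n : ℕ, w = ((t : ℂ) * z) • (T ^ n) v} → v ≠ 0 := by
    intro v hd hv0
    have hsub : {w : X | ∃ t ∈ Set.Icc (1 : ℝ) b, ∃ z : ℂ, ‖z‖ = 1 ∧
        ∃ n : ℕ, w = ((t : ℂ) * z) • (T ^ n) v} ⊆ {(0 : X)} := by
      rintro w ⟨t, ht, z, hz, n, rfl⟩
      simp [hv0]
    have h2 : v₀ ∈ closure ({(0:X)} : Set X) := closure_mono hsub (hd v₀)
    rw [closure_singleton] at h2
    exact hv₀ h2
  have hxne := hne x hx
  have hyne := hne y hy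
  have hxnorm : ‖x‖ ≠ 0 := norm_ne_zero_iff.2 hxne
  -- scales in [1,b] appearing in the x-orbit closure are 1 or b
  have hone : ∀ t : ℝ, t ∈ Set.Icc (1:ℝ) b → ((t:ℝ):ℂ) • x ∈ AnnulusSC.C T x →
      t = 1 ∨ t = b := by
    intro t ht hmem
    have ht0 : 0 < t := lt_of_lt_of_le zero_lt_one ht.1
    have hmem2 : ((t:ℝ):ℂ) • x ∈
        closure {y : X | ∃ z : ℂ, ‖z‖ = 1 ∧ ∃ n : ℕ, y = z • (T ^ n) x} ∩
        {y : X | ∃ t ∈ Set.Icc (1 : ℝ) b, ∃ z : ℂ, ‖z‖ = 1 ∧ y = ((t : ℂ) * z) • x} :=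
      ⟨hmem, t, ht, 1, by simp, by rw [mul_one]⟩
    rw [hexc] at hmem2
    rcases hmem2 with ⟨z, hz, heq⟩ | ⟨z, hz, heq⟩
    · left
      have h3 := congrArg norm heq
      rw [norm_smul, norm_smul, hz, one_mul, Complex.norm_real, Real.norm_eq_abs,
        abs_of_pos ht0] at h3
      exact mul_right_cancel₀ hxnorm (by rw [h3, one_mul])
    · right
      have h3 := congrArg norm heq
      rw [norm_smul, norm_smul, norm_mul, hz, mul_one, Complex.norm_real, Complex.norm_real,
        Real.norm_eq_abs, Real.norm_eq_abs, abs_of_pos ht0, abs_of_pos hb0] at h3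
      exact mul_right_cancel₀ hxnorm h3
  -- b • x is in the orbit closure
  have hbmem : ((b:ℝ):ℂ) • x ∈ AnnulusSC.C T x := by
    have h1 : ((b : ℂ) * 1) • x ∈
        {y : X | ∃ z : ℂ, ‖z‖ = 1 ∧ y = z • x} ∪
        {y : X | ∃ z : ℂ, ‖z‖ = 1 ∧ y = ((b : ℂ) * z) • x} :=
      Or.inr ⟨1, by simp, rfl⟩
    rw [← hexc] at h1
    have h2 := h1.1
    rw [mul_one] at h2
    exact h2
  -- multiplicativity of real scales
  have hmul : ∀ s t : ℝ, ((s:ℝ):ℂ) • x ∈ AnnulusSC.C T x →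
      ((t:ℝ):ℂ) • x ∈ AnnulusSC.C T x → ((s * t : ℝ):ℂ) • x ∈ AnnulusSC.C T x := by
    intro s t hs ht
    have h := AnnulusSC.smul_mem_C T hs ht
    rwa [smul_smul, ← Complex.ofReal_mul] at h
  -- square root facts
  set β := Real.sqrt b with hβdef
  have hβ1 : 1 < β := by
    rw [hβdef, show (1:ℝ) = Real.sqrt 1 by simp]
    exact Real.sqrt_lt_sqrt zero_le_one hb
  have hβ0 : 0 < β := lt_trans zero_lt_one hβ1
  have hββ : β * β = b := Real.mul_self_sqrt hb0.le
  have hβltb : β < b := by nlinarith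
  have hβinv1 : β⁻¹ < 1 := by
    rw [inv_eq_one_div]
    exact (div_lt_one hβ0).2 hβ1
  -- interval bounds for zpow
  have hkrange : ∀ k : ℤ, (1:ℝ) ≤ b ^ k → (b:ℝ) ^ k ≤ b → k = 0 ∨ k = 1 := by
    intro k h1 h2
    have h0 : (0:ℤ) ≤ k := by
      by_contra h
      push_neg at h
      have h3 := zpow_lt_zpow_right₀ hb h
      rw [zpow_zero] at h3
      linarith
    have h1' : k ≤ 1 := by
      by_contra h
      push_neg at h
      have h3 := zpow_lt_zpow_right₀ hb h
      rw [zpow_one] at h3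
      linarith
    interval_cases k
    · exact Or.inl rfl
    · exact Or.inr rfl
  -- the main rigidity for x : all real scales in C T x are integer powers of b
  have hGx : ∀ s : ℝ, 0 < s → ((s:ℝ):ℂ) • x ∈ AnnulusSC.C T x → ∃ k : ℤ, s = b ^ k := by
    -- first : b⁻¹ is a scale
    obtain ⟨u, hu, htm⟩ := AnnulusSC.exists_real_scale T x hb hx β⁻¹
    have hu0 : 0 < u := lt_of_lt_of_le zero_lt_one hu.1
    set t := β⁻¹ / u with htdef
    have ht0 : 0 < t := div_pos (inv_pos.2 hβ0) hu0
    have htub : t ≤ β⁻¹ := by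
      rw [htdef, div_le_iff₀ hu0]
      nlinarith [(inv_pos.2 hβ0).le, hu.1]
    have htlb : β⁻¹ / b ≤ t := by
      rw [htdef, div_le_div_iff₀ hb0 hu0]
      nlinarith [(inv_pos.2 hβ0).le, hu.2]
    have hβinvb : β⁻¹ * b = β := by
      field_simp
      linarith [hββ]
    have htb := hmul t b htm hbmem
    have hinvb : ((b⁻¹:ℝ):ℂ) • x ∈ AnnulusSC.C T x := by
      rcases le_or_gt 1 (t * b) with h1 | h1
      · have hub : t * b ≤ b := by nlinarith
        rcases hone (t*b) ⟨h1, hub⟩ htb with h | h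
        · have ht' : t = b⁻¹ := by
            rw [inv_eq_one_div, eq_div_iff (ne_of_gt hb0)]
            exact h
          rw [← ht']
          exact htm
        · exfalso
          have ht1 : t = 1 := mul_right_cancel₀ (ne_of_gt hb0) (by rw [h, one_mul])
          linarith
      · exfalso
        have htbb := hmul (t*b) b htb hbmem
        have h5 : β⁻¹ ≤ t * b := (div_le_iff₀ hb0).1 htlb
        have hge : β ≤ t * b * b := by
          nlinarith [mul_le_mul_of_nonneg_right h5 hb0.le]
        have hlt : t * b * b < b := by nlinarith
        rcases hone (t*b*b) ⟨by linarith, hlt.le⟩ htbb with h | h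
        · linarith
        · linarith
    have hpow : ∀ n : ℕ, ((b ^ n : ℝ):ℂ) • x ∈ AnnulusSC.C T x := by
      intro n
      induction n with
      | zero => simpa using AnnulusSC.self_mem_C T x
      | succ n ih =>
        have h := hmul (b ^ n) b ih hbmem
        rwa [← pow_succ] at h
    have hpowinv : ∀ n : ℕ, ((b⁻¹ ^ n : ℝ):ℂ) • x ∈ AnnulusSC.C T x := by
      intro n
      induction n with
      | zero => simpa using AnnulusSC.self_mem_C T x
      | succ n ih =>
        have h := hmul (b⁻¹ ^ n) b⁻¹ ih hinvb
        rwa [← pow_succ] at h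
    have hzpow : ∀ k : ℤ, ((b ^ k : ℝ):ℂ) • x ∈ AnnulusSC.C T x := by
      intro k
      rcases k with n | n
      · simpa [zpow_natCast] using hpow n
      · rw [zpow_negSucc, ← inv_pow]
        exact hpowinv (n+1)
    intro s hs0 hsmem
    obtain ⟨k, hk1, hk2⟩ := exists_mem_Ico_zpow hs0 hb
    have hbk : (0:ℝ) < b ^ k := zpow_pos hb0 k
    have hmem := hmul s (b ^ (-k)) hsmem (hzpow (-k))
    have hform : s * (b:ℝ) ^ (-k) = s / b ^ k := by
      rw [zpow_neg, div_eq_mul_inv]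
    rw [hform] at hmem
    have hb1 : 1 ≤ s / b ^ k := (one_le_div hbk).2 hk1
    have hb2 : s / b ^ k < b := by
      rw [div_lt_iff₀ hbk]
      calc s < b ^ (k+1) := hk2
        _ = b * b ^ k := by rw [zpow_add_one₀ (ne_of_gt hb0), mul_comm]
    rcases hone (s / b ^ k) ⟨hb1, hb2.le⟩ hmem with h | h
    · exact ⟨k, (div_eq_one_iff_eq (ne_of_gt hbk)).1 h⟩
    · exact absurd h (ne_of_lt hb2)
  -- crossing between the orbits of x and y
  obtain ⟨c1, hc1N, hc1⟩ := AnnulusSC.exists_annulus_inv_smul T y hb hy x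
  obtain ⟨c2, hc2N, hc2⟩ := AnnulusSC.exists_annulus_inv_smul T x hb hx y
  have hc10 : c1 ≠ 0 := by
    intro h
    rw [h, norm_zero] at hc1N
    exact absurd hc1N.1 (by norm_num)
  have hc20 : c2 ≠ 0 := by
    intro h
    rw [h, norm_zero] at hc2N
    exact absurd hc2N.1 (by norm_num)
  have hu10 : (0:ℝ) < ‖c1‖ := lt_of_lt_of_le zero_lt_one hc1N.1
  have hu20 : (0:ℝ) < ‖c2‖ := lt_of_lt_of_le zero_lt_one hc2N.1
  -- rigidity for y
  have hGy : ∀ s : ℝ, 0 < s → ((s:ℝ):ℂ) • y ∈ AnnulusSC.C T y → ∃ k : ℤ, s = b ^ k := by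
    intro s hs0 hsy
    have h0 : c2⁻¹ • (c1⁻¹ • x) ∈ AnnulusSC.C T x := AnnulusSC.smul_mem_C T hc2 hc1
    have h1 : (s:ℂ) • (c1⁻¹ • x) ∈ AnnulusSC.C T y := AnnulusSC.smul_mem_C T hsy hc1
    have h2 : c2⁻¹ • ((s:ℂ) • (c1⁻¹ • x)) ∈ AnnulusSC.C T x := AnnulusSC.smul_mem_C T hc2 h1
    have hζu : ‖(c1 * c2) / ((‖c1‖ : ℂ) * (‖c2‖ : ℂ))‖ = 1 := by
      rw [norm_div, norm_mul, norm_mul, Complex.norm_real, Complex.norm_real,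
        Real.norm_eq_abs, Real.norm_eq_abs, abs_norm, abs_norm,
        div_self (ne_of_gt (mul_pos hu10 hu20))]
    have e0raw := AnnulusSC.smul_pow_mem_C T x h0 hζu 0
    have e2raw := AnnulusSC.smul_pow_mem_C T x h2 hζu 0
    have key0 : ((c1 * c2) / ((‖c1‖ : ℂ) * (‖c2‖ : ℂ))) •
        ((T ^ 0) (c2⁻¹ • (c1⁻¹ • x))) = ((1 / (‖c1‖ * ‖c2‖) : ℝ):ℂ) • x := by
      rw [pow_zero, ContinuousLinearMap.one_apply, smul_smul, smul_smul]
      congr 1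
      push_cast
      field_simp [hc10, hc20]
    have key2 : ((c1 * c2) / ((‖c1‖ : ℂ) * (‖c2‖ : ℂ))) •
        ((T ^ 0) (c2⁻¹ • ((s:ℂ) • (c1⁻¹ • x)))) = ((s / (‖c1‖ * ‖c2‖) : ℝ):ℂ) • x := by
      rw [pow_zero, ContinuousLinearMap.one_apply, smul_smul, smul_smul, smul_smul]
      congr 1
      push_cast
      field_simp [hc10, hc20]
    rw [key0] at e0raw
    rw [key2] at e2raw
    obtain ⟨k0, hk0⟩ := hGx _ (div_pos one_pos (mul_pos hu10 hu20)) e0raw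
    obtain ⟨k1, hk1⟩ := hGx _ (div_pos hs0 (mul_pos hu10 hu20)) e2raw
    refine ⟨k1 - k0, ?_⟩
    have hm0 : ‖c1‖ * ‖c2‖ ≠ 0 := ne_of_gt (mul_pos hu10 hu20)
    have hme : ‖c1‖ * ‖c2‖ = ((b:ℝ) ^ k0)⁻¹ := by
      rw [← hk0, one_div, inv_inv]
    have hs_eq : s = b ^ k1 * ((b:ℝ) ^ k0)⁻¹ := by
      rw [← hk1, ← hme, div_mul_cancel₀ _ hm0]
    rw [hs_eq, ← zpow_neg, ← zpow_add₀ (ne_of_gt hb0), ← sub_eq_add_neg]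
  -- b is a scale for y
  obtain ⟨u3, hu3, h3⟩ := AnnulusSC.exists_real_scale T y hb hy (β * b)
  have hu30 : 0 < u3 := lt_of_lt_of_le zero_lt_one hu3.1
  have h3pos : 0 < β * b / u3 := div_pos (mul_pos hβ0 hb0) hu30
  obtain ⟨k, hk⟩ := hGy _ h3pos h3
  have hklb : β ≤ (b:ℝ) ^ k := by
    rw [← hk, le_div_iff₀ hu30]
    nlinarith [hu3.2, hβ0.le]
  have hkub : (b:ℝ) ^ k ≤ β * b := by
    rw [← hk, div_le_iff₀ hu30]
    nlinarith [hu3.1, mul_pos hβ0 hb0]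
  have hk1' : k = 1 := by
    have hgt0 : (0:ℤ) < k := by
      by_contra h
      push_neg at h
      have h4 := zpow_le_zpow_right₀ hb.le h
      rw [zpow_zero] at h4
      linarith
    have hlt2 : k < 2 := by
      by_contra h
      push_neg at h
      have h4 := zpow_le_zpow_right₀ hb.le h
      rw [show ((2:ℤ)) = ((2:ℕ):ℤ) by norm_num, zpow_natCast, pow_two] at h4
      have h5 : β * b < b * b := mul_lt_mul_of_pos_right hβltb hb0
      linarith
    omega
  have hbGy : ((b:ℝ):ℂ) • y ∈ AnnulusSC.C T y := by
    have heq : β * b / u3 = b := by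
      rw [hk, hk1', zpow_one]
    rwa [heq] at h3
  -- scales of y in [1,b] are 1 or b
  have honey : ∀ t : ℝ, t ∈ Set.Icc (1:ℝ) b → ((t:ℝ):ℂ) • y ∈ AnnulusSC.C T y →
      t = 1 ∨ t = b := by
    intro t ht hmem
    obtain ⟨k', hk'⟩ := hGy t (lt_of_lt_of_le zero_lt_one ht.1) hmem
    rcases hkrange k' (by rw [← hk']; exact ht.1) (by rw [← hk']; exact ht.2) with h | h
    · left; rw [hk', h, zpow_zero]
    · right; rw [hk', h, zpow_one]
  -- conclusion
  ext w
  simp only [Set.mem_inter_iff, Set.mem_union, Set.mem_setOf_eq]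
  constructor
  · rintro ⟨hwC, t, ht, z, hz, rfl⟩
    have hz0 : z ≠ 0 := by
      intro h
      rw [h, norm_zero] at hz
      norm_num at hz
    have hzinv : ‖z⁻¹‖ = 1 := by rw [norm_inv, hz, inv_one]
    have hmem := AnnulusSC.smul_pow_mem_C T y hwC hzinv 0
    have heq : z⁻¹ • ((T ^ 0) (((t:ℂ) * z) • y)) = ((t:ℝ):ℂ) • y := by
      rw [pow_zero, ContinuousLinearMap.one_apply, smul_smul]
      congr 1
      field_simp
    rw [heq] at hmem
    rcases honey t ht hmem with rfl | rfl
    · exact Or.inl ⟨z, hz, by rw [Complex.ofReal_one, one_mul]⟩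
    · exact Or.inr ⟨z, hz, rfl⟩
  · rintro (⟨z, hz, rfl⟩ | ⟨z, hz, rfl⟩)
    · refine ⟨?_, 1, ⟨le_refl 1, hb.le⟩, z, hz, by rw [Complex.ofReal_one, one_mul]⟩
      exact subset_closure ⟨z, hz, 0, by rw [pow_zero, ContinuousLinearMap.one_apply]⟩
    · refine ⟨?_, b, ⟨hb.le, le_refl b⟩, z, hz, rfl⟩
      have hmem := AnnulusSC.smul_pow_mem_C T y hbGy hz 0
      have heq : z • ((T ^ 0) (((b:ℝ):ℂ) • y)) = ((b:ℂ) * z) • y := by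
        rw [pow_zero, ContinuousLinearMap.one_apply, smul_smul, mul_comm]
      rwa [heq] at hmem
end

section
/- Let X be an infinite-dimensional complex Banach space, T a bounded linear operator on X, and b > 1. Suppose x ∈ X is [1,b]𝕋-supercyclic for T and the closure of Orb(𝕋x,T) intersected with [1,b]𝕋x equals 𝕋x ∪ b𝕋x. If μ > 0 is a real number such that μ·x belongs to the closure of Orb(𝕋x,T), then μ·b^m·x belongs to the closure of Orb(𝕋x,T) for every m ∈ ℤ. -/
/-!
The scalars `c` with `c • x ∈ closure Orb(𝕋x, T)` form a multiplicative monoid `S`, because the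
maps `w • T ^ k` preserve that closure and commute with scalar multiplication. It contains `μ` by
hypothesis and `b` because `b • x ∈ b𝕋x`, so it suffices to show `b⁻¹ ∈ S`. As `[1, b]` is
compact and `Orb([1,b]𝕋x, T)` is dense, the vector `b⁻¹ • x` is `r • y` with `r ∈ [1, b]` and
`y` in the orbit closure, that is `(r * b)⁻¹ ∈ S`. Then `b / r = (r * b)⁻¹ * b * b` lies in
`S ∩ [1, b] = {1, b}`, so `r = 1` or `r = b`, and in either case `b⁻¹ ∈ S`.
-/

open Set
open scoped Pointwise

theorem Submonoid.zpow_mem_of_inv_mem {G : Type*} [DivisionMonoid G] (S : Submonoid G) {a : G}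
    (ha : a ∈ S) (ha_inv : a⁻¹ ∈ S) : ∀ n : ℤ, a ^ n ∈ S
  | (n : ℕ) => by simpa using pow_mem ha n
  | .negSucc n => by simpa [zpow_negSucc, inv_pow] using pow_mem ha_inv (n + 1)

/- Inside the group `𝕜ˣ` the set `L • closure A` is closed (`IsClosed.smul_left_of_isCompact`),
so it contains the closure of `L • A`. -/
theorem exists_inv_smul_mem_closure_of_dense_smul {𝕜 X : Type*} [NormedField 𝕜] [AddCommGroup X]
    [Module 𝕜 X] [TopologicalSpace X] [ContinuousSMul 𝕜 X] {L : Set 𝕜} (hL : IsCompact L)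
    (hL0 : (0 : 𝕜) ∉ L) {A : Set X} (hA : Dense (L • A)) (y : X) :
    ∃ t ∈ L, t⁻¹ • y ∈ closure A := by
  have hL_units : L ⊆ range ((↑) : 𝕜ˣ → 𝕜) := fun t ht ↦
    ⟨Units.mk0 t (ne_of_mem_of_not_mem ht hL0), rfl⟩
  have hK : IsCompact (((↑) : 𝕜ˣ → 𝕜) ⁻¹' L) :=
    Units.isEmbedding_val₀.isInducing.isCompact_preimage' hL hL_units
  have hsub : L • A ⊆ (((↑) : 𝕜ˣ → 𝕜) ⁻¹' L) • closure A := by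
    rintro _ ⟨t, ht, a, ha, rfl⟩
    obtain ⟨u, rfl⟩ := hL_units ht
    exact smul_mem_smul ht (subset_closure ha)
  obtain ⟨u, hu, c, hc, rfl⟩ :=
    (isClosed_closure.smul_left_of_isCompact hK).closure_subset_iff.2 hsub (hA y)
  exact ⟨u, hu, by simpa [Units.smul_def, inv_smul_smul₀ u.ne_zero] using hc⟩

namespace ContinuousLinearMap

section CircleOrbit

variable {X : Type*} [AddCommMonoid X] [Module ℂ X] [TopologicalSpace X] (T : X →L[ℂ] X) (x : X)

/-- `Orb(𝕋x, T)`. -/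
def circleOrbit : Set X := {y | ∃ z : ℂ, ‖z‖ = 1 ∧ ∃ n : ℕ, y = z • (T ^ n) x}

variable {T x}

theorem self_mem_circleOrbit : x ∈ T.circleOrbit x :=
  ⟨1, norm_one, 0, by simp⟩

theorem smul_pow_apply_mem_circleOrbit {w : ℂ} (hw : ‖w‖ = 1) (k : ℕ) {y : X}
    (hy : y ∈ T.circleOrbit x) : w • (T ^ k) y ∈ T.circleOrbit x := by
  obtain ⟨z, hz, n, rfl⟩ := hy
  refine ⟨w * z, by rw [norm_mul, hw, hz, one_mul], k + n, ?_⟩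
  rw [map_smul, mul_smul, pow_add]
  rfl

variable [ContinuousConstSMul ℂ X]

theorem smul_pow_apply_mem_closure_circleOrbit {w : ℂ} (hw : ‖w‖ = 1) (k : ℕ) {y : X}
    (hy : y ∈ closure (T.circleOrbit x)) : w • (T ^ k) y ∈ closure (T.circleOrbit x) :=
  map_mem_closure (f := fun y ↦ w • (T ^ k) y) (by fun_prop) hy
    fun _ ↦ smul_pow_apply_mem_circleOrbit hw k

theorem mul_smul_mem_closure_circleOrbit {c d : ℂ} (hc : c • x ∈ closure (T.circleOrbit x))
    (hd : d • x ∈ closure (T.circleOrbit x)) : (c * d) • x ∈ closure (T.circleOrbit x) := by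
  have hmaps : MapsTo (c • ·) (T.circleOrbit x) (closure (T.circleOrbit x)) := by
    rintro _ ⟨z, hz, n, rfl⟩
    show c • z • (T ^ n) x ∈ _
    rw [smul_comm, ← map_smul]
    exact smul_pow_apply_mem_closure_circleOrbit hz n hc
  rw [mul_smul]
  exact hmaps.closure_left (continuous_const_smul c) isClosed_closure hd

variable (T x) in
def orbitClosureScalars : Submonoid ℂ where
  carrier := {c | c • x ∈ closure (T.circleOrbit x)}
  one_mem' := by simpa using subset_closure self_mem_circleOrbit
  mul_mem' := mul_smul_mem_closure_circleOrbit

theorem mem_orbitClosureScalars {c : ℂ} :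
    c ∈ T.orbitClosureScalars x ↔ c • x ∈ closure (T.circleOrbit x) :=
  Iff.rfl

end CircleOrbit

variable {X : Type*} [AddCommGroup X] [Module ℂ X] [TopologicalSpace X] {T : X →L[ℂ] X} {x : X}
  {b : ℝ}

theorem eq_one_or_eq_of_ofReal_mem_orbitClosureScalars [ContinuousConstSMul ℂ X] (hx0 : x ≠ 0)
    (hexc : closure (T.circleOrbit x) ∩
        {y | ∃ t ∈ Icc (1 : ℝ) b, ∃ z : ℂ, ‖z‖ = 1 ∧ y = ((t : ℂ) * z) • x} ⊆
      {y | ∃ z : ℂ, ‖z‖ = 1 ∧ y = z • x} ∪ {y | ∃ z : ℂ, ‖z‖ = 1 ∧ y = ((b : ℂ) * z) • x})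
    {t : ℝ} (ht : t ∈ Icc 1 b) (htS : (t : ℂ) ∈ T.orbitClosureScalars x) : t = 1 ∨ t = b := by
  have ht0 : 0 < t := one_pos.trans_le ht.1
  have hb0 : 0 ≤ b := ht0.le.trans ht.2
  rcases hexc ⟨htS, t, ht, 1, norm_one, by rw [mul_one]⟩ with ⟨z, hz, h⟩ | ⟨z, hz, h⟩
  · left
    have := congrArg norm (smul_left_injective ℂ hx0 h)
    rwa [hz, Complex.norm_of_nonneg ht0.le] at this
  · right
    have := congrArg norm (smul_left_injective ℂ hx0 h)
    rwa [norm_mul, hz, mul_one, Complex.norm_of_nonneg ht0.le, Complex.norm_of_nonneg hb0] at this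

theorem inv_mem_orbitClosureScalars [ContinuousSMul ℂ X]
    (hx : Dense {y | ∃ t ∈ Icc (1 : ℝ) b, ∃ z : ℂ, ‖z‖ = 1 ∧ ∃ n : ℕ, y = ((t : ℂ) * z) • (T ^ n) x})
    (hexc : closure (T.circleOrbit x) ∩
        {y | ∃ t ∈ Icc (1 : ℝ) b, ∃ z : ℂ, ‖z‖ = 1 ∧ y = ((t : ℂ) * z) • x} ⊆
      {y | ∃ z : ℂ, ‖z‖ = 1 ∧ y = z • x} ∪ {y | ∃ z : ℂ, ‖z‖ = 1 ∧ y = ((b : ℂ) * z) • x})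
    (hbS : (b : ℂ) ∈ T.orbitClosureScalars x) : (b : ℂ)⁻¹ ∈ T.orbitClosureScalars x := by
  by_cases hx0 : x = 0
  · subst hx0
    rw [mem_orbitClosureScalars, smul_zero]
    exact subset_closure self_mem_circleOrbit
  have hsub : {y | ∃ t ∈ Icc (1 : ℝ) b, ∃ z : ℂ, ‖z‖ = 1 ∧ ∃ n : ℕ, y = ((t : ℂ) * z) • (T ^ n) x} ⊆
      ((↑) '' Icc (1 : ℝ) b : Set ℂ) • T.circleOrbit x := by
    rintro _ ⟨t, ht, z, hz, n, rfl⟩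
    exact ⟨t, mem_image_of_mem _ ht, z • (T ^ n) x, ⟨z, hz, n, rfl⟩, (mul_smul _ _ _).symm⟩
  have hnotmem : (0 : ℂ) ∉ ((↑) '' Icc (1 : ℝ) b : Set ℂ) := by
    rintro ⟨r, hr, hr0⟩
    exact (one_pos.trans_le hr.1).ne' (Complex.ofReal_eq_zero.1 hr0)
  obtain ⟨_, ⟨r, hr, rfl⟩, hrS⟩ := exists_inv_smul_mem_closure_of_dense_smul
    (isCompact_Icc.image Complex.continuous_ofReal) hnotmem (hx.mono hsub) ((b : ℂ)⁻¹ • x)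
  have hr0 : 0 < r := one_pos.trans_le hr.1
  have hb0 : 0 < b := hr0.trans_le hr.2
  have hs : (r : ℂ)⁻¹ * (b : ℂ)⁻¹ ∈ T.orbitClosureScalars x := by
    rwa [mem_orbitClosureScalars, mul_smul]
  have hbr : ((b / r : ℝ) : ℂ) ∈ T.orbitClosureScalars x := by
    convert mul_mem (mul_mem hs hbS) hbS using 1
    push_cast
    field_simp
  rcases eq_one_or_eq_of_ofReal_mem_orbitClosureScalars hx0 hexc
    ⟨(one_le_div hr0).2 hr.2, div_le_self hb0.le hr.1⟩ hbr with h | h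
  · obtain rfl : r = b := ((div_eq_one_iff_eq hr0.ne').1 h).symm
    convert mul_mem hs hbS using 1
    field_simp
  · obtain rfl : r = 1 := by
      rwa [div_eq_iff hr0.ne', left_eq_mul₀ hb0.ne'] at h
    simpa using hs

end ContinuousLinearMap

theorem annulus_supercyclic_powers_of_b_general
    (X : Type*) [NormedAddCommGroup X] [NormedSpace ℂ X]
    (T : X →L[ℂ] X) (b : ℝ)
    (x : X)
    (hx : Dense {y : X | ∃ t ∈ Set.Icc (1 : ℝ) b, ∃ z : ℂ, ‖z‖ = 1 ∧
      ∃ n : ℕ, y = ((t : ℂ) * z) • (T ^ n) x})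
    (hexc : closure {y : X | ∃ z : ℂ, ‖z‖ = 1 ∧ ∃ n : ℕ, y = z • (T ^ n) x} ∩
        {y : X | ∃ t ∈ Set.Icc (1 : ℝ) b, ∃ z : ℂ, ‖z‖ = 1 ∧ y = ((t : ℂ) * z) • x} =
      {y : X | ∃ z : ℂ, ‖z‖ = 1 ∧ y = z • x} ∪
        {y : X | ∃ z : ℂ, ‖z‖ = 1 ∧ y = ((b : ℂ) * z) • x})
    (μ : ℝ)
    (hmem : ((μ : ℂ)) • x ∈ closure {y : X | ∃ z : ℂ, ‖z‖ = 1 ∧ ∃ n : ℕ, y = z • (T ^ n) x}) :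
    ∀ m : ℤ, ((μ * b ^ m : ℝ) : ℂ) • x ∈
      closure {y : X | ∃ z : ℂ, ‖z‖ = 1 ∧ ∃ n : ℕ, y = z • (T ^ n) x} := by
  intro m
  have hμS : (μ : ℂ) ∈ T.orbitClosureScalars x := hmem
  have hbS : (b : ℂ) ∈ T.orbitClosureScalars x :=
    (hexc.ge (Or.inr ⟨1, norm_one, by rw [mul_one]⟩ : (b : ℂ) • x ∈ _ ∪ _)).1
  have hb_invS := ContinuousLinearMap.inv_mem_orbitClosureScalars hx hexc.le hbS
  rw [Complex.ofReal_mul, Complex.ofReal_zpow]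
  exact mul_mem hμS ((T.orbitClosureScalars x).zpow_mem_of_inv_mem hbS hb_invS m)

/-- **Lemma 3.9.** Let `x` be `[1,b]𝕋`-supercyclic for `T` with
`closure(Orb(𝕋x,T)) ∩ [1,b]𝕋x = 𝕋x ∪ b𝕋x`. If `μ > 0` and `μ·x ∈ closure(Orb(𝕋x,T))`,
then `μ·b^m·x ∈ closure(Orb(𝕋x,T))` for every `m ∈ ℤ`. -/
theorem annulus_supercyclic_powers_of_b
    (X : Type*) [NormedAddCommGroup X] [NormedSpace ℂ X] [CompleteSpace X]
    (hX : ¬FiniteDimensional ℂ X) (T : X →L[ℂ] X) (b : ℝ) (hb : 1 < b)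
    (x : X)
    (hx : Dense {y : X | ∃ t ∈ Set.Icc (1 : ℝ) b, ∃ z : ℂ, ‖z‖ = 1 ∧
      ∃ n : ℕ, y = ((t : ℂ) * z) • (T ^ n) x})
    (hexc : closure {y : X | ∃ z : ℂ, ‖z‖ = 1 ∧ ∃ n : ℕ, y = z • (T ^ n) x} ∩
        {y : X | ∃ t ∈ Set.Icc (1 : ℝ) b, ∃ z : ℂ, ‖z‖ = 1 ∧ y = ((t : ℂ) * z) • x} =
      {y : X | ∃ z : ℂ, ‖z‖ = 1 ∧ y = z • x} ∪
        {y : X | ∃ z : ℂ, ‖z‖ = 1 ∧ y = ((b : ℂ) * z) • x})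
    (μ : ℝ) (hμ : 0 < μ)
    (hmem : ((μ : ℂ)) • x ∈ closure {y : X | ∃ z : ℂ, ‖z‖ = 1 ∧ ∃ n : ℕ, y = z • (T ^ n) x}) :
    ∀ m : ℤ, ((μ * b ^ m : ℝ) : ℂ) • x ∈
      closure {y : X | ∃ z : ℂ, ‖z‖ = 1 ∧ ∃ n : ℕ, y = z • (T ^ n) x} :=
  annulus_supercyclic_powers_of_b_general X T b x hx hexc μ hmem
end

section
/- Let X be an infinite-dimensional complex Banach space, T a bounded linear operator on X, and b > 1. Suppose x ∈ X is [1,b]𝕋-supercyclic for T and the closure of Orb(𝕋x,T) intersected with [1,b]𝕋x equals 𝕋x ∪ b𝕋x. Then every vector y ∈ X that is [1,b]𝕋-supercyclic for T satisfies: the closure of Orb(𝕋y,T) intersected with {t·y : t ∈ ℝ, t > 0} equals {b^n·y : n ∈ ℤ}. -/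
/-!
For a vector `v` let `Λ_v` be the set of `s > 0` with `s v ∈ closure Orb(𝕋v, T)`. It is a
multiplicative monoid, because the orbit closure of any point of `closure Orb(𝕋v, T)` lies in
that of `v`, and if `v` is `[1,b]𝕋`-supercyclic then, by compactness of `[1,b]`, `Λ_v` meets every
interval `[s/b, s]`. The hypothesis on `x` says `Λ_x ∩ [1,b] = {1,b}`; with the interval property
this forces `b⁻¹ ∈ Λ_x`, hence `Λ_x = b^ℤ`. Scaling `y` into the orbit closure of `x` and back gives
`c Λ_y ⊆ Λ_x` for some `c ∈ Λ_x`, so `Λ_y ⊆ b^ℤ`, and the interval property gives equality.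
-/

open Set Filter

theorem Submonoid.inv_mem_of_inter_Ico_subset_one {M : Submonoid ℝ} {b : ℝ} (hb : 1 < b)
    (hbM : b ∈ M) (htrap : (M : Set ℝ) ∩ Ico 1 b ⊆ {1})
    (hgap : ∀ s, 0 < s → ((M : Set ℝ) ∩ Icc (s / b) s).Nonempty) : b⁻¹ ∈ M := by
  have hb0 : 0 < b := one_pos.trans hb
  have hbinv : b⁻¹ < 1 := inv_lt_one_of_one_lt₀ hb
  -- any `τ ∈ M` with `b⁻² < τ < 1` must be `b⁻¹`, else `τ b` or `τ b²` lands in `(1, b)`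
  obtain ⟨τ, hτM, hτl, hτu⟩ := hgap ((1 + b⁻¹) / 2) (by positivity)
  have hτb : b⁻¹ < τ * b := by
    rw [div_le_iff₀ hb0] at hτl
    linarith
  by_cases h : 1 ≤ τ * b
  · have : τ * b = 1 := htrap ⟨mul_mem hτM hbM, h, by nlinarith⟩
    rwa [← eq_inv_of_mul_eq_one_left this]
  · have h1 : 1 < τ * b * b := by
      calc 1 = b⁻¹ * b := (inv_mul_cancel₀ hb0.ne').symm
        _ < τ * b * b := by gcongr
    have : τ * b * b = 1 := htrap ⟨mul_mem (mul_mem hτM hbM) hbM, h1.le, by nlinarith⟩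
    exact absurd this h1.ne'

theorem Submonoid.zpow_mem_of_inv_mem_s15 {M : Submonoid ℝ} {b : ℝ} (hb : b ≠ 0) (hbM : b ∈ M)
    (hbinv : b⁻¹ ∈ M) (n : ℤ) : b ^ n ∈ M := by
  induction n using Int.induction_on with
  | zero => rw [zpow_zero]; exact M.one_mem
  | succ n ih => simpa [zpow_add_one₀ hb] using mul_mem ih hbM
  | pred n ih => simpa [zpow_sub_one₀ hb] using mul_mem ih hbinv

theorem Submonoid.subset_range_zpow_of_inter_Ico_subset_one {M : Submonoid ℝ} {b : ℝ}
    (hb : 1 < b) (hpos : ∀ s ∈ M, 0 < s) (hbM : b ∈ M) (hbinv : b⁻¹ ∈ M)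
    (htrap : (M : Set ℝ) ∩ Ico 1 b ⊆ {1}) : (M : Set ℝ) ⊆ range (b ^ · : ℤ → ℝ) := by
  intro s hs
  have hb0 : 0 < b := one_pos.trans hb
  obtain ⟨n, hn, hn'⟩ := exists_mem_Ico_zpow (hpos s hs) hb
  have hbn : 0 < b ^ n := zpow_pos hb0 n
  have hmem : s * b ^ (-n) ∈ M := mul_mem hs (M.zpow_mem_of_inv_mem_s15 hb0.ne' hbM hbinv _)
  rw [zpow_neg, ← div_eq_mul_inv] at hmem
  have : s / b ^ n = 1 := htrap ⟨hmem, (one_le_div hbn).2 hn,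
    (div_lt_iff₀ hbn).2 (by rwa [mul_comm, ← zpow_add_one₀ hb0.ne'])⟩
  exact ⟨n, ((div_eq_one_iff_eq hbn.ne').1 this).symm⟩

theorem range_zpow_subset_of_inter_Icc_nonempty {S : Set ℝ} {b : ℝ} (hb : 1 < b)
    (hS : S ⊆ range (b ^ · : ℤ → ℝ)) (hgap : ∀ s, 0 < s → (S ∩ Icc (s / b) s).Nonempty) :
    range (b ^ · : ℤ → ℝ) ⊆ S := by
  rintro _ ⟨n, rfl⟩
  have hb0 : 0 < b := one_pos.trans hb
  have hbn : 0 < b ^ n := zpow_pos hb0 n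
  -- the only power of `b` in `[b^n c / b, b^n c]`, for `1 < c < b`, is `b^n`
  obtain ⟨_, hτS, hτl, hτu⟩ := hgap (b ^ n * ((1 + b) / 2)) (by positivity)
  obtain ⟨m, rfl⟩ := hS hτS
  have hlow : b ^ (n - 1) < b ^ m := by
    rw [zpow_sub_one₀ hb0.ne']
    refine lt_of_lt_of_le ?_ hτl
    exact div_lt_div_of_pos_right (lt_mul_of_one_lt_right hbn (by linarith)) hb0
  have hhigh : b ^ m < b ^ (n + 1) := by
    rw [zpow_add_one₀ hb0.ne']
    exact hτu.trans_lt (mul_lt_mul_of_pos_left (by linarith) hbn)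
  rw [zpow_lt_zpow_iff_right₀ hb] at hlow hhigh
  rwa [show m = n by omega] at hτS

section CircleOrbit

variable {X : Type*} [NormedAddCommGroup X] [NormedSpace ℂ X]

/-- `Orb(𝕋v, T)`. -/
def circleOrbit (T : X →L[ℂ] X) (v : X) : Set X :=
  {w | ∃ z : ℂ, ‖z‖ = 1 ∧ ∃ n : ℕ, w = z • (T ^ n) v}

/-- `Orb(K𝕋v, T)` for a set `K` of real scalars. -/
def scaledCircleOrbit (K : Set ℝ) (T : X →L[ℂ] X) (v : X) : Set X :=
  {w | ∃ t ∈ K, ∃ z : ℂ, ‖z‖ = 1 ∧ ∃ n : ℕ, w = ((t : ℂ) * z) • (T ^ n) v}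

variable {T : X →L[ℂ] X} {v w : X}

theorem self_mem_circleOrbit (T : X →L[ℂ] X) (v : X) : v ∈ circleOrbit T v :=
  ⟨1, norm_one, 0, by simp⟩

theorem mapsTo_circleOrbit {z : ℂ} (hz : ‖z‖ = 1) (n : ℕ) :
    MapsTo (fun u => z • (T ^ n) u) (circleOrbit T v) (circleOrbit T v) := by
  rintro _ ⟨z', hz', m, rfl⟩
  refine ⟨z * z', by rw [norm_mul, hz, hz', one_mul], n + m, ?_⟩
  dsimp only
  rw [map_smul, smul_smul, pow_add, mul_apply_eq_comp]

theorem mapsTo_smul_circleOrbit (c : ℂ) :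
    MapsTo (c • ·) (circleOrbit T v) (circleOrbit T (c • v)) := by
  rintro _ ⟨z, hz, n, rfl⟩
  exact ⟨z, hz, n, by rw [map_smul, smul_comm]⟩

theorem smul_mem_closure_circleOrbit_smul (c : ℂ) (hw : w ∈ closure (circleOrbit T v)) :
    c • w ∈ closure (circleOrbit T (c • v)) :=
  map_mem_closure (continuous_const_smul c) hw (mapsTo_smul_circleOrbit c)

theorem closure_circleOrbit_subset (hw : w ∈ closure (circleOrbit T v)) :
    closure (circleOrbit T w) ⊆ closure (circleOrbit T v) := by
  refine closure_minimal ?_ isClosed_closure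
  rintro _ ⟨z, hz, n, rfl⟩
  exact map_mem_closure (f := fun u => z • (T ^ n) u) (by fun_prop) hw (mapsTo_circleOrbit hz n)

def positiveMultipliers (T : X →L[ℂ] X) (v : X) : Submonoid ℝ where
  carrier := {s | 0 < s ∧ (s : ℂ) • v ∈ closure (circleOrbit T v)}
  one_mem' := ⟨one_pos, by simpa using subset_closure (self_mem_circleOrbit T v)⟩
  mul_mem' := by
    rintro s u ⟨hs, hsv⟩ ⟨hu, huv⟩
    refine ⟨mul_pos hs hu, ?_⟩
    rw [Complex.ofReal_mul, mul_smul]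
    exact closure_circleOrbit_subset hsv (smul_mem_closure_circleOrbit_smul _ huv)

theorem mem_positiveMultipliers {s : ℝ} :
    s ∈ positiveMultipliers T v ↔ 0 < s ∧ (s : ℂ) • v ∈ closure (circleOrbit T v) :=
  Iff.rfl

theorem closure_circleOrbit_inter_positive_smul :
    closure (circleOrbit T v) ∩ {w | ∃ t : ℝ, 0 < t ∧ w = (t : ℂ) • v} =
      (fun s : ℝ => (s : ℂ) • v) '' positiveMultipliers T v := by
  ext w
  constructor
  · rintro ⟨hw, t, ht, rfl⟩
    exact ⟨t, ⟨ht, hw⟩, rfl⟩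
  · rintro ⟨t, ⟨ht, hw⟩, rfl⟩
    exact ⟨hw, t, ht, rfl⟩

theorem mul_mem_positiveMultipliers {x y : X} {t r s : ℝ} (ht : 0 < t) (hr : 0 < r)
    (hty : (t : ℂ) • y ∈ closure (circleOrbit T x))
    (hrx : (r : ℂ) • x ∈ closure (circleOrbit T y)) (hs : s ∈ positiveMultipliers T y) :
    t * r * s ∈ positiveMultipliers T x := by
  refine ⟨mul_pos (mul_pos ht hr) hs.1, ?_⟩
  have hsrx : (s : ℂ) • (r : ℂ) • x ∈ closure (circleOrbit T y) :=
    closure_circleOrbit_subset hs.2 (smul_mem_closure_circleOrbit_smul _ hrx)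
  have := closure_circleOrbit_subset hty (smul_mem_closure_circleOrbit_smul (t : ℂ) hsrx)
  rw [mul_right_comm]
  simpa only [Complex.ofReal_mul, mul_smul] using this

theorem exists_inv_smul_mem_closure_circleOrbit {K : Set ℝ} (hK : IsCompact K) (hK0 : 0 ∉ K)
    (hv : Dense (scaledCircleOrbit K T v)) (p : X) :
    ∃ t ∈ K, ((t⁻¹ : ℝ) : ℂ) • p ∈ closure (circleOrbit T v) := by
  obtain ⟨u, hu, hup⟩ := mem_closure_iff_seq_limit.1 (hv p)
  choose t ht z hz n hn using hu
  obtain ⟨t₀, ht₀, φ, hφ, htφ⟩ := hK.tendsto_subseq ht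
  have hne : ∀ s ∈ K, (s : ℂ) ≠ 0 := fun s hs h0 => hK0 (Complex.ofReal_eq_zero.1 h0 ▸ hs)
  refine ⟨t₀, ht₀, mem_closure_of_tendsto (b := atTop)
    (f := fun k => ((t (φ k))⁻¹ : ℂ) • u (φ k)) ?_
    (Eventually.of_forall fun k => ⟨z (φ k), hz (φ k), n (φ k), ?_⟩)⟩
  · push_cast
    exact ((Complex.continuous_ofReal.tendsto t₀).comp htφ).inv₀ (hne t₀ ht₀) |>.smul
      (hup.comp hφ.tendsto_atTop)
  · rw [hn, smul_smul, ← mul_assoc, inv_mul_cancel₀ (hne _ (ht _)), one_mul]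

theorem positiveMultipliers_inter_Icc_nonempty {b : ℝ}
    (hv : Dense (scaledCircleOrbit (Icc 1 b) T v)) {s : ℝ} (hs : 0 < s) :
    ((positiveMultipliers T v : Set ℝ) ∩ Icc (s / b) s).Nonempty := by
  obtain ⟨t, ⟨ht1, htb⟩, hmem⟩ := exists_inv_smul_mem_closure_circleOrbit isCompact_Icc
    (fun h => by norm_num at h) hv ((s : ℂ) • v)
  have ht : 0 < t := one_pos.trans_le ht1
  refine ⟨s / t, ⟨by positivity, ?_⟩, div_le_div_of_nonneg_left hs.le ht htb,
    div_le_self hs.le ht1⟩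
  rwa [div_eq_inv_mul, Complex.ofReal_mul, mul_smul]

theorem ne_zero_of_dense_scaledCircleOrbit [Nontrivial X] {K : Set ℝ}
    (hv : Dense (scaledCircleOrbit K T v)) : v ≠ 0 := by
  rintro rfl
  obtain ⟨p, hp⟩ := exists_ne (0 : X)
  have hsub : scaledCircleOrbit K T 0 ⊆ {0} := by
    rintro _ ⟨t, -, z, -, n, rfl⟩
    simp
  exact hp (by simpa using closure_mono hsub (hv p))

theorem positiveMultipliers_subset_range_zpow {x y : X} {b : ℝ} (hb : 1 < b)
    (hx : Dense (scaledCircleOrbit (Icc 1 b) T x)) (hy : Dense (scaledCircleOrbit (Icc 1 b) T y))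
    (hΛx : (positiveMultipliers T x : Set ℝ) ⊆ range (b ^ · : ℤ → ℝ)) :
    (positiveMultipliers T y : Set ℝ) ⊆ range (b ^ · : ℤ → ℝ) := by
  have hK0 : (0 : ℝ) ∉ Icc 1 b := fun h => by norm_num at h
  obtain ⟨t, ht, hty⟩ := exists_inv_smul_mem_closure_circleOrbit isCompact_Icc hK0 hx y
  obtain ⟨r, hr, hrx⟩ := exists_inv_smul_mem_closure_circleOrbit isCompact_Icc hK0 hy x
  have ht0 : 0 < t⁻¹ := inv_pos.2 (one_pos.trans_le ht.1)
  have hr0 : 0 < r⁻¹ := inv_pos.2 (one_pos.trans_le hr.1)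
  have hmul := fun {s} (hs : s ∈ positiveMultipliers T y) =>
    mul_mem_positiveMultipliers ht0 hr0 hty hrx hs
  intro s hs
  obtain ⟨m, hm⟩ := hΛx (by simpa using hmul (one_mem _))
  obtain ⟨n, hn⟩ := hΛx (hmul hs)
  refine ⟨n - m, ?_⟩
  dsimp only at hm hn ⊢
  rw [zpow_sub₀ (one_pos.trans hb).ne', hm, hn, mul_div_cancel_left₀ _ (by positivity)]

theorem mem_positiveMultipliers_of_subset {x : X} {b : ℝ} (hb : 0 < b)
    (hexc : {y | ∃ z : ℂ, ‖z‖ = 1 ∧ y = ((b : ℂ) * z) • x} ⊆ closure (circleOrbit T x)) :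
    b ∈ positiveMultipliers T x :=
  ⟨hb, hexc ⟨1, norm_one, by rw [mul_one]⟩⟩

theorem positiveMultipliers_inter_Ico_subset_one {x : X} (hx0 : x ≠ 0) {b : ℝ}
    (hexc : closure (circleOrbit T x) ∩
        {y | ∃ t ∈ Icc (1 : ℝ) b, ∃ z : ℂ, ‖z‖ = 1 ∧ y = ((t : ℂ) * z) • x} ⊆
      {y | ∃ z : ℂ, ‖z‖ = 1 ∧ y = z • x} ∪ {y | ∃ z : ℂ, ‖z‖ = 1 ∧ y = ((b : ℂ) * z) • x}) :
    (positiveMultipliers T x : Set ℝ) ∩ Ico 1 b ⊆ {1} := by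
  rintro s ⟨⟨hs0, hs⟩, hs1, hsb⟩
  have hnorm {c : ℂ} (h : (s : ℂ) • x = c • x) : s = ‖c‖ := by
    rw [← smul_left_injective ℂ hx0 h, Complex.norm_real, Real.norm_of_nonneg hs0.le]
  have hb0 : 0 ≤ b := by linarith
  rcases hexc ⟨hs, s, ⟨hs1, hsb.le⟩, 1, norm_one, by rw [mul_one]⟩ with ⟨z, hz, h⟩ | ⟨z, hz, h⟩
  · rw [hnorm h, hz]; rfl
  · rw [hnorm h, norm_mul, hz, mul_one, Complex.norm_real, Real.norm_of_nonneg hb0] at hsb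
    exact (lt_irrefl b hsb).elim

end CircleOrbit

theorem annulus_supercyclic_positive_multiples_general
    (X : Type*) [NormedAddCommGroup X] [NormedSpace ℂ X]
    (T : X →L[ℂ] X) (b : ℝ) (hb : 1 < b)
    (x : X)
    (hx : Dense {y : X | ∃ t ∈ Set.Icc (1 : ℝ) b, ∃ z : ℂ, ‖z‖ = 1 ∧
      ∃ n : ℕ, y = ((t : ℂ) * z) • (T ^ n) x})
    (hexc : closure {y : X | ∃ z : ℂ, ‖z‖ = 1 ∧ ∃ n : ℕ, y = z • (T ^ n) x} ∩
        {y : X | ∃ t ∈ Set.Icc (1 : ℝ) b, ∃ z : ℂ, ‖z‖ = 1 ∧ y = ((t : ℂ) * z) • x} =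
      {y : X | ∃ z : ℂ, ‖z‖ = 1 ∧ y = z • x} ∪
        {y : X | ∃ z : ℂ, ‖z‖ = 1 ∧ y = ((b : ℂ) * z) • x}) :
    ∀ y : X,
      Dense {w : X | ∃ t ∈ Set.Icc (1 : ℝ) b, ∃ z : ℂ, ‖z‖ = 1 ∧
        ∃ n : ℕ, w = ((t : ℂ) * z) • (T ^ n) y} →
      closure {w : X | ∃ z : ℂ, ‖z‖ = 1 ∧ ∃ n : ℕ, w = z • (T ^ n) y} ∩
          {w : X | ∃ t : ℝ, 0 < t ∧ w = ((t : ℝ) : ℂ) • y} =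
        {w : X | ∃ n : ℤ, w = ((b ^ n : ℝ) : ℂ) • y} := by
  intro y hy
  rcases subsingleton_or_nontrivial X with hX | hX
  · ext w
    rw [Subsingleton.elim w y]
    exact iff_of_true ⟨subset_closure (self_mem_circleOrbit T y), 1, one_pos, by simp⟩ ⟨0, by simp⟩
  have htrap := positiveMultipliers_inter_Ico_subset_one
    (ne_zero_of_dense_scaledCircleOrbit hx) hexc.subset
  have hbM := mem_positiveMultipliers_of_subset (one_pos.trans hb) fun w hw =>
    (hexc.superset (Or.inr hw)).1
  have hΛx := Submonoid.subset_range_zpow_of_inter_Ico_subset_one hb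
    (fun _ hs => (mem_positiveMultipliers.1 hs).1) hbM
    (Submonoid.inv_mem_of_inter_Ico_subset_one hb hbM htrap
      fun _ hs => positiveMultipliers_inter_Icc_nonempty hx hs) htrap
  have hΛy := positiveMultipliers_subset_range_zpow hb hx hy hΛx
  have heq := hΛy.antisymm <| range_zpow_subset_of_inter_Icc_nonempty hb hΛy
    fun _ hs => positiveMultipliers_inter_Icc_nonempty hy hs
  refine (closure_circleOrbit_inter_positive_smul (T := T) (v := y)).trans ?_
  rw [heq, ← range_comp]
  ext w
  exact exists_congr fun n => eq_comm

/-- **Lemma 3.10.** If `x` is `[1,b]𝕋`-supercyclic for `T` with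
`closure(Orb(𝕋x,T)) ∩ [1,b]𝕋x = 𝕋x ∪ b𝕋x`, then every `[1,b]𝕋`-supercyclic vector `y`
satisfies `closure(Orb(𝕋y,T)) ∩ ℝ₊y = {b^n·y : n ∈ ℤ}`. -/
theorem annulus_supercyclic_positive_multiples
    (X : Type*) [NormedAddCommGroup X] [NormedSpace ℂ X] [CompleteSpace X]
    (hX : ¬FiniteDimensional ℂ X) (T : X →L[ℂ] X) (b : ℝ) (hb : 1 < b)
    (x : X)
    (hx : Dense {y : X | ∃ t ∈ Set.Icc (1 : ℝ) b, ∃ z : ℂ, ‖z‖ = 1 ∧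
      ∃ n : ℕ, y = ((t : ℂ) * z) • (T ^ n) x})
    (hexc : closure {y : X | ∃ z : ℂ, ‖z‖ = 1 ∧ ∃ n : ℕ, y = z • (T ^ n) x} ∩
        {y : X | ∃ t ∈ Set.Icc (1 : ℝ) b, ∃ z : ℂ, ‖z‖ = 1 ∧ y = ((t : ℂ) * z) • x} =
      {y : X | ∃ z : ℂ, ‖z‖ = 1 ∧ y = z • x} ∪
        {y : X | ∃ z : ℂ, ‖z‖ = 1 ∧ y = ((b : ℂ) * z) • x}) :
    ∀ y : X,
      Dense {w : X | ∃ t ∈ Set.Icc (1 : ℝ) b, ∃ z : ℂ, ‖z‖ = 1 ∧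
        ∃ n : ℕ, w = ((t : ℂ) * z) • (T ^ n) y} →
      closure {w : X | ∃ z : ℂ, ‖z‖ = 1 ∧ ∃ n : ℕ, w = z • (T ^ n) y} ∩
          {w : X | ∃ t : ℝ, 0 < t ∧ w = ((t : ℝ) : ℂ) • y} =
        {w : X | ∃ n : ℤ, w = ((b ^ n : ℝ) : ℂ) • y} :=
  annulus_supercyclic_positive_multiples_general X T b hb x hx hexc
end

section
/- Let Γ ⊆ ℂ be nonempty and assume that for every complex Banach space X, every bounded linear operator T on X and every x ∈ X, if Orb(Γx,T) is somewhere dense in X then x is hypercyclic for T. Then closure(Γ𝕋) \ {0} is bounded, bounded away from 0, and has empty interior in ℂ. -/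
/-!
Taking `X = ℂ`, `T = λ • 1` and `x = 1`, the hypothesis says that `{γ λⁿ : γ ∈ Γ, n ∈ ℕ}` is
nowhere dense for every `λ ∈ ℂ`, because `{λⁿ}` is never dense in `ℂ`. Each of the three
conclusions is proved by producing a `λ` violating this, via the Baire category theorem applied
to the parameter `λ`: if `Γ` contains scalars of arbitrarily large (resp. small) modulus, then for
a generic `λ` with `|λ| < 1` (resp. `|λ| > 1`) the orbit `{γ λⁿ}` is dense in `ℂ`; and for a generic
`λ` on the unit circle `{λⁿ}` is dense in `𝕋`, so the closure of `{γ λⁿ}` contains `closure (Γ𝕋)`.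
-/

open Set Filter Topology Metric Real

theorem exists_mem_subset_closure_range_of_subset_closure_iUnion_preimage {ι P Y : Type*}
    [TopologicalSpace P] [BaireSpace P] [TopologicalSpace Y] [SecondCountableTopology Y]
    {f : ι → P → Y} (hf : ∀ i, Continuous (f i)) {O : Set P} (hO : IsOpen O) (hO' : O.Nonempty)
    {S : Set Y} (h : ∀ V, IsOpen V → (V ∩ S).Nonempty → O ⊆ closure (⋃ i, f i ⁻¹' V)) :
    ∃ p ∈ O, S ⊆ closure (range fun i => f i p) := by
  obtain ⟨B, hBc, -, hB⟩ := TopologicalSpace.exists_countable_basis Y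
  -- Outside `closure O` there is nothing to prove, which makes these open sets dense.
  have hres : ∀ᶠ p in residual P, ∀ V ∈ {V ∈ B | (V ∩ S).Nonempty},
      p ∈ (⋃ i, f i ⁻¹' V) ∪ (closure O)ᶜ := by
    refine (eventually_countable_ball (hBc.mono (sep_subset _ _))).2 fun V hV => ?_
    refine residual_of_dense_open ((isOpen_iUnion fun i => (hB.isOpen hV.1).preimage (hf i)).union
      isClosed_closure.isOpen_compl) ?_
    show Dense ((⋃ i, f i ⁻¹' V) ∪ (closure O)ᶜ)
    rw [dense_iff_closure_eq, closure_union, eq_univ_iff_forall]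
    intro p
    by_cases hp : p ∈ closure O
    · exact Or.inl (closure_minimal (h V (hB.isOpen hV.1) hV.2) isClosed_closure hp)
    · exact Or.inr (subset_closure hp)
  obtain ⟨p, hpO, hp⟩ := (dense_of_mem_residual hres).inter_open_nonempty O hO hO'
  refine ⟨p, hpO, fun y hy => hB.mem_closure_iff.2 fun V hV hyV => ?_⟩
  obtain ⟨i, hi⟩ := mem_iUnion.1 ((hp V ⟨hV, y, hyV, hy⟩).resolve_right
    (not_not.2 (subset_closure hpO)))
  exact ⟨f i p, hi, i, rfl⟩

theorem Complex.exists_exp_pow_eq {z : ℂ} (hz : z ≠ 0) {n : ℕ} (hn : n ≠ 0) (θ : ℝ) :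
    ∃ L : ℂ, exp L ^ n = z ∧ L.re = Real.log ‖z‖ / n ∧ |L.im - θ| ≤ π / n := by
  set k := round ((n * θ - arg z) / (2 * π))
  have hn' : (0 : ℝ) < n := by positivity
  refine ⟨(log z + k * (2 * π * I)) / n, ?_, ?_, ?_⟩
  · rw [← exp_nat_mul, mul_div_cancel₀ _ (by exact_mod_cast hn), exp_add, exp_log hz,
      exp_int_mul_two_pi_mul_I, mul_one]
  · simp [log_re]
  · have hround : |(n * θ - arg z) / (2 * π) - k| ≤ 1 / 2 := abs_sub_round _
    have him : ((log z + k * (2 * π * I)) / n).im - θ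
        = 2 * π * (k - (n * θ - arg z) / (2 * π)) / n := by
      simp only [div_natCast_im, add_im, log_im, mul_im, intCast_re, mul_re, re_ofNat, ofReal_re,
        im_ofNat, ofReal_im, mul_zero, sub_zero, I_im, mul_one, zero_mul, add_zero, I_re,
        intCast_im, sub_self]
      field_simp
      ring
    rw [him, abs_div, abs_mul, abs_of_pos hn', abs_of_pos (by positivity), abs_sub_comm]
    gcongr
    linarith [mul_le_mul_of_nonneg_left hround two_pi_pos.le]

theorem eventually_exists_nat_abs_div_sub_lt {R δ : ℝ} (hR : 0 < R) (hδ : 0 < δ) (N : ℕ) :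
    ∀ᶠ t in atTop, ∃ n ≥ N, |t / n - R| < δ := by
  filter_upwards [eventually_ge_atTop (N * R), eventually_gt_atTop (R ^ 2 / δ),
    eventually_gt_atTop 0] with t htN htδ ht
  set n := ⌈t / R⌉₊
  have hn_ge : t / R ≤ n := Nat.le_ceil _
  have hn_lt : (n : ℝ) < t / R + 1 := Nat.ceil_lt_add_one (by positivity)
  have hn : 0 < (n : ℝ) := (div_pos ht hR).trans_le hn_ge
  refine ⟨n, by exact_mod_cast (le_div_iff₀ hR).2 htN |>.trans hn_ge, ?_⟩
  rw [div_le_iff₀ hR] at hn_ge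
  replace hn_lt : (n : ℝ) * R < t + R := by
    simpa [add_mul, div_mul_cancel₀ _ hR.ne'] using mul_lt_mul_of_pos_right hn_lt hR
  rw [div_lt_iff₀ hδ] at htδ
  rw [abs_sub_lt_iff, sub_lt_iff_lt_add, sub_lt_comm, div_lt_iff₀ hn, lt_div_iff₀ hn]
  constructor <;> nlinarith

theorem exists_mem_ball_mul_exp_pow_eq {Γ : Set ℂ} {σ : ℝ} (hσ : |σ| = 1)
    (hΓ : ∀ M : ℝ, ∃ γ ∈ Γ, γ ≠ 0 ∧ M ≤ σ * Real.log ‖γ‖) {L₀ : ℂ} (hL₀ : σ * L₀.re < 0)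
    {ε : ℝ} (hε : 0 < ε) {w : ℂ} (hw : w ≠ 0) :
    ∃ γ ∈ Γ, ∃ n : ℕ, ∃ L ∈ ball L₀ ε, γ * Complex.exp L ^ n = w := by
  -- Take `γ` so extreme that `log ‖w / γ‖ ≈ n * L₀.re` for some large `n`; an `n`-th root of
  -- `w / γ` then lies near `exp L₀`.
  have hσσ : σ * σ = 1 := by rw [← abs_mul_abs_self, hσ, one_mul]
  obtain ⟨N, hN⟩ := exists_nat_gt (2 * π / ε)
  obtain ⟨M, hM⟩ := (eventually_exists_nat_abs_div_sub_lt (neg_pos.2 hL₀) (half_pos hε)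
    (N + 1)).exists_forall_of_atTop
  obtain ⟨γ, hγΓ, hγ, hγM⟩ := hΓ (M + σ * Real.log ‖w‖)
  obtain ⟨n, hnN, hn⟩ := hM (σ * (Real.log ‖γ‖ - Real.log ‖w‖))
    (by linarith [mul_sub σ (Real.log ‖γ‖) (Real.log ‖w‖)])
  have hn₀ : n ≠ 0 := by omega
  obtain ⟨L, hLpow, hLre, hLim⟩ := Complex.exists_exp_pow_eq (div_ne_zero hw hγ) hn₀ L₀.im
  refine ⟨γ, hγΓ, n, L, ?_, by rw [hLpow, mul_div_cancel₀ _ hγ]⟩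
  have hre : |(L - L₀).re| < ε / 2 := by
    have : (L - L₀).re = -σ * (σ * (Real.log ‖γ‖ - Real.log ‖w‖) / n - -(σ * L₀.re)) := by
      rw [Complex.sub_re, hLre, norm_div, Real.log_div (norm_ne_zero_iff.2 hw)
        (norm_ne_zero_iff.2 hγ)]
      field_simp
      linear_combination (n * L₀.re + Real.log ‖γ‖ - Real.log ‖w‖) * hσσ
    rwa [this, abs_mul, abs_neg, hσ, one_mul]
  have him : |(L - L₀).im| < ε / 2 := by
    rw [div_lt_iff₀ hε] at hN
    calc |(L - L₀).im| ≤ π / n := by rwa [Complex.sub_im]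
      _ ≤ π / (N + 1 : ℕ) := by gcongr
      _ < ε / 2 := by
        rw [div_lt_div_iff₀ (by positivity) two_pos]
        push_cast
        linarith
  rw [mem_ball, dist_eq_norm]
  calc ‖L - L₀‖ ≤ |(L - L₀).re| + |(L - L₀).im| := Complex.norm_le_abs_re_add_abs_im _
    _ < ε := by linarith

def scalarOrbit (Γ : Set ℂ) (l : ℂ) : Set ℂ := {y | ∃ γ ∈ Γ, ∃ n : ℕ, y = γ * l ^ n}

def mulUnitCircle (Γ : Set ℂ) : Set ℂ := {w | ∃ γ ∈ Γ, ∃ z : ℂ, ‖z‖ = 1 ∧ w = γ * z}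

theorem range_mul_pow_eq_scalarOrbit (Γ : Set ℂ) (l : ℂ) :
    range (fun i : Γ × ℕ => (i.1 : ℂ) * l ^ i.2) = scalarOrbit Γ l := by
  ext y
  simp [scalarOrbit, eq_comm]

theorem exists_dense_scalarOrbit {Γ : Set ℂ} {σ : ℝ} (hσ : |σ| = 1)
    (hΓ : ∀ M : ℝ, ∃ γ ∈ Γ, γ ≠ 0 ∧ M ≤ σ * Real.log ‖γ‖) :
    ∃ l : ℂ, Dense (scalarOrbit Γ l) := by
  have hO : IsOpen {L : ℂ | σ * L.re < 0} := isOpen_lt (by fun_prop) continuous_const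
  have hO' : ({L : ℂ | σ * L.re < 0}).Nonempty := ⟨-σ, by simp [← abs_mul_abs_self, hσ]⟩
  obtain ⟨L, -, hL⟩ := exists_mem_subset_closure_range_of_subset_closure_iUnion_preimage
    (f := fun (i : Γ × ℕ) (L : ℂ) => (i.1 : ℂ) * Complex.exp L ^ i.2) (by fun_prop) hO hO'
    (S := univ) fun V hV hVne L₀ hL₀ => Metric.mem_closure_iff.2 fun ε hε => by
      obtain ⟨w, hwV, hw⟩ := (dense_compl_singleton (0 : ℂ)).inter_open_nonempty V hV
        (by simpa using hVne)
      obtain ⟨γ, hγ, n, L, hL, rfl⟩ := exists_mem_ball_mul_exp_pow_eq hσ hΓ hL₀ hε hw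
      exact ⟨L, mem_iUnion.2 ⟨(⟨γ, hγ⟩, n), hwV⟩, mem_ball'.1 hL⟩
  refine ⟨Complex.exp L, ?_⟩
  rw [← range_mul_pow_eq_scalarOrbit]
  exact dense_iff_closure_eq.2 (univ_subset_iff.1 hL)

theorem exists_sphere_subset_closure_range_pow :
    ∃ l : ℂ, sphere 0 1 ⊆ closure (range (l ^ · : ℕ → ℂ)) := by
  obtain ⟨α, -, hα⟩ := exists_mem_subset_closure_range_of_subset_closure_iUnion_preimage
    (f := fun (n : ℕ) (α : ℝ) => Complex.exp (α * Complex.I) ^ n) (by fun_prop) isOpen_univ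
    univ_nonempty (S := sphere 0 1) fun V hV ⟨w, hwV, hw⟩ α₀ _ =>
      Metric.mem_closure_iff.2 fun ε hε => by
        rw [mem_sphere_zero_iff_norm] at hw
        obtain ⟨n, hn⟩ := exists_nat_gt (π / ε)
        have hn₀ : n ≠ 0 := (Nat.cast_pos.1 ((div_pos pi_pos hε).trans hn)).ne'
        obtain ⟨L, hLpow, hLre, hLim⟩ :=
          Complex.exists_exp_pow_eq (norm_ne_zero_iff.1 (hw.trans_ne one_ne_zero)) hn₀ α₀
        have hL : (L.im : ℂ) * Complex.I = L := by
          apply Complex.ext <;> simp [hLre, hw]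
        refine ⟨L.im, mem_iUnion.2 ⟨n, by simpa [hL, hLpow] using hwV⟩, ?_⟩
        rw [Real.dist_eq, abs_sub_comm]
        refine hLim.trans_lt ?_
        rw [div_lt_iff₀ hε] at hn
        rwa [div_lt_iff₀ (by positivity), mul_comm]
  exact ⟨_, hα⟩

theorem mulUnitCircle_subset_closure_scalarOrbit {Γ : Set ℂ} {l : ℂ}
    (hl : sphere 0 1 ⊆ closure (range (l ^ · : ℕ → ℂ))) :
    mulUnitCircle Γ ⊆ closure (scalarOrbit Γ l) := by
  rintro _ ⟨γ, hγ, z, hz, rfl⟩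
  exact map_mem_closure (continuous_const_mul γ) (hl (mem_sphere_zero_iff_norm.2 hz))
    (by rintro _ ⟨n, rfl⟩; exact ⟨γ, hγ, n, rfl⟩)

theorem not_dense_range_pow (l : ℂ) : ¬ Dense (range (l ^ · : ℕ → ℂ)) := by
  intro hd
  rcases le_total ‖l‖ 1 with h | h
  · have hsub : range (l ^ · : ℕ → ℂ) ⊆ closedBall 0 1 := by
      rintro _ ⟨n, rfl⟩
      simpa using pow_le_one₀ (norm_nonneg l) h
    have := closure_minimal hsub isClosed_closedBall (hd.closure_eq ▸ mem_univ (2 : ℂ))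
    norm_num at this
  · have hsub : range (l ^ · : ℕ → ℂ) ⊆ {z | 1 ≤ ‖z‖} := by
      rintro _ ⟨n, rfl⟩
      simpa using one_le_pow₀ h
    have := closure_minimal hsub (isClosed_le continuous_const continuous_norm)
      (hd.closure_eq ▸ mem_univ (0 : ℂ))
    norm_num at this

theorem exists_abs_norm_sub_lt_of_mem_closure_mulUnitCircle {Γ : Set ℂ} {w : ℂ}
    (hw : w ∈ closure (mulUnitCircle Γ)) {ε : ℝ} (hε : 0 < ε) :
    ∃ γ ∈ Γ, |‖γ‖ - ‖w‖| < ε := by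
  obtain ⟨_, ⟨γ, hγ, z, hz, rfl⟩, hd⟩ := Metric.mem_closure_iff.1 hw ε hε
  refine ⟨γ, hγ, ?_⟩
  calc |‖γ‖ - ‖w‖| = |‖γ * z‖ - ‖w‖| := by rw [norm_mul, hz, mul_one]
    _ ≤ ‖γ * z - w‖ := abs_norm_sub_norm_le _ _
    _ < ε := by rwa [← dist_eq_norm, dist_comm]

theorem exists_log_norm_ge_of_not_isBounded {Γ : Set ℂ}
    (h : ¬ Bornology.IsBounded (closure (mulUnitCircle Γ))) (M : ℝ) :
    ∃ γ ∈ Γ, γ ≠ 0 ∧ M ≤ Real.log ‖γ‖ := by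
  rw [isBounded_iff_forall_norm_le] at h
  push Not at h
  obtain ⟨w, hw, hwM⟩ := h (exp M + 1)
  obtain ⟨γ, hγ, hγw⟩ := exists_abs_norm_sub_lt_of_mem_closure_mulUnitCircle hw one_pos
  have hγM : exp M < ‖γ‖ := by linarith [(abs_lt.1 hγw).1]
  have hγ₀ : 0 < ‖γ‖ := (exp_pos M).trans hγM
  exact ⟨γ, hγ, norm_pos_iff.1 hγ₀, ((lt_log_iff_exp_lt hγ₀).2 hγM).le⟩

theorem exists_neg_log_norm_ge_of_forall_exists_norm_lt {Γ : Set ℂ}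
    (h : ∀ a > 0, ∃ w ∈ closure (mulUnitCircle Γ) \ {0}, ‖w‖ < a) (M : ℝ) :
    ∃ γ ∈ Γ, γ ≠ 0 ∧ M ≤ -Real.log ‖γ‖ := by
  obtain ⟨w, ⟨hw, hw₀⟩, hwM⟩ := h (exp (-M) / 2) (by positivity)
  obtain ⟨γ, hγ, hγw⟩ := exists_abs_norm_sub_lt_of_mem_closure_mulUnitCircle hw
    (norm_pos_iff.2 hw₀)
  obtain ⟨hlow, hup⟩ := abs_lt.1 hγw
  have hγ₀ : 0 < ‖γ‖ := by linarith
  refine ⟨γ, hγ, norm_pos_iff.1 hγ₀, ?_⟩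
  rw [le_neg, log_le_iff_le_exp hγ₀]
  linarith

theorem somewhere_hypercyclic_scalar_set_necessity_general (Γ : Set ℂ)
    (H : ∀ (X : Type) [NormedAddCommGroup X] [NormedSpace ℂ X] [CompleteSpace X],
      ∀ (T : X →L[ℂ] X) (x : X),
        (interior (closure {y : X | ∃ γ ∈ Γ, ∃ n : ℕ, y = γ • (T ^ n) x})).Nonempty →
        Dense {y : X | ∃ n : ℕ, y = (T ^ n) x}) :
    Bornology.IsBounded (closure {w : ℂ | ∃ γ ∈ Γ, ∃ z : ℂ, ‖z‖ = 1 ∧ w = γ * z} \ {0}) ∧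
    (∃ a : ℝ, 0 < a ∧
      ∀ w ∈ closure {w : ℂ | ∃ γ ∈ Γ, ∃ z : ℂ, ‖z‖ = 1 ∧ w = γ * z} \ {0}, a ≤ ‖w‖) ∧
    interior (closure {w : ℂ | ∃ γ ∈ Γ, ∃ z : ℂ, ‖z‖ = 1 ∧ w = γ * z} \ {0}) = ∅ := by
  have hempty : ∀ l : ℂ, interior (closure (scalarOrbit Γ l)) = ∅ := by
    intro l
    by_contra hne
    have hpow : ∀ n : ℕ, ((l • 1 : ℂ →L[ℂ] ℂ) ^ n) 1 = l ^ n := by simp [smul_pow]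
    apply not_dense_range_pow l
    simpa [hpow, eq_comm, Set.range] using H ℂ (l • 1) 1
      (by simpa [hpow, scalarOrbit] using nonempty_iff_ne_empty.2 hne)
  have hnot_dense (l : ℂ) : ¬ Dense (scalarOrbit Γ l) := fun hd => by
    simpa [hd.closure_eq] using hempty l
  refine ⟨?_, ?_, ?_⟩
  · by_contra hb
    obtain ⟨l, hl⟩ := exists_dense_scalarOrbit (σ := 1) (by simp) (by
      simpa using exists_log_norm_ge_of_not_isBounded fun h => hb (h.subset sdiff_subset))
    exact hnot_dense l hl
  · by_contra hb
    push Not at hb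
    obtain ⟨l, hl⟩ := exists_dense_scalarOrbit (σ := -1) (by simp) (by
      simpa using exists_neg_log_norm_ge_of_forall_exists_norm_lt hb)
    exact hnot_dense l hl
  · obtain ⟨l, hl⟩ := exists_sphere_subset_closure_range_pow
    refine subset_empty_iff.1 ((interior_mono ?_).trans (hempty l).subset)
    exact sdiff_subset.trans
      (closure_minimal (mulUnitCircle_subset_closure_scalarOrbit hl) isClosed_closure)

/-- **Proposition 4.2.** Suppose the nonempty set `Γ ⊆ ℂ` is such that for every complex
Banach space `X`, every `T ∈ L(X)` and every `x ∈ X`, whenever `Orb(Γx,T)` is somewhere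
dense in `X`, `x` is hypercyclic for `T`. Then `closure(Γ𝕋) \ {0}` is bounded, bounded away
from `0` and has empty interior. -/
theorem somewhere_hypercyclic_scalar_set_necessity (Γ : Set ℂ) (hΓ : Γ.Nonempty)
    (H : ∀ (X : Type) [NormedAddCommGroup X] [NormedSpace ℂ X] [CompleteSpace X],
      ∀ (T : X →L[ℂ] X) (x : X),
        (interior (closure {y : X | ∃ γ ∈ Γ, ∃ n : ℕ, y = γ • (T ^ n) x})).Nonempty →
        Dense {y : X | ∃ n : ℕ, y = (T ^ n) x}) :
    Bornology.IsBounded (closure {w : ℂ | ∃ γ ∈ Γ, ∃ z : ℂ, ‖z‖ = 1 ∧ w = γ * z} \ {0}) ∧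
    (∃ a : ℝ, 0 < a ∧
      ∀ w ∈ closure {w : ℂ | ∃ γ ∈ Γ, ∃ z : ℂ, ‖z‖ = 1 ∧ w = γ * z} \ {0}, a ≤ ‖w‖) ∧
    interior (closure {w : ℂ | ∃ γ ∈ Γ, ∃ z : ℂ, ‖z‖ = 1 ∧ w = γ * z} \ {0}) = ∅ :=
  somewhere_hypercyclic_scalar_set_necessity_general Γ H
end
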